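/- arXiv:2008.08638 — 5 statements merged into one kernel-verified Lean document; each statement's English description precedes it below -/
import Mathlib

section
/- Let L ≥ 1 and A ≥ 0 be real constants, and let n be a positive integer with n > L² + 2LA. If f : B_n → ℤ is an (L,A)-quasi-isometric embedding, then either f(−n) < f(0) < f(n) or f(n) < f(0) < f(−n). -/
/-!
Consecutive points of `B_n` are sent at most `L + A` apart, while points at distance at least `n`
are sent more than `L + A` apart: this is exactly what `n > L² + 2LA` buys. If `f 0` were not
strictly between `f (-n)` and `f n`, one of the endpoint values would lie between `f 0` and the
other endpoint value, and a discrete intermediate value argument on the half of `B_n` from `0` to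
that other endpoint would produce a point within `L + A` of it in value but at distance at least
`n` from it.
-/

open Set

theorem between_or_mem_uIcc_or_mem_uIcc {α : Type*} [LinearOrder α] (x y z : α) :
    (x < y ∧ y < z) ∨ (z < y ∧ y < x) ∨ z ∈ uIcc x y ∨ x ∈ uIcc y z := by
  simp only [mem_uIcc]
  grind

theorem Int.exists_abs_sub_le_of_mem_uIcc {α : Type*} [AddCommGroup α] [LinearOrder α]
    [IsOrderedAddMonoid α] {g : ℤ → α} {C t : α} {a b : ℤ} (hC : 0 ≤ C) (hab : a ≤ b)
    (hstep : ∀ k, a ≤ k → k < b → |g (k + 1) - g k| ≤ C) (ht : t ∈ uIcc (g a) (g b)) :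
    ∃ k ∈ Icc a b, |g k - t| ≤ C := by
  induction b, hab using Int.leInduction with
  | base =>
    rw [uIcc_self, mem_singleton_iff] at ht
    exact ⟨a, left_mem_Icc.2 le_rfl, by rw [ht, sub_self, abs_zero]; exact hC⟩
  | succ b hab ih =>
    by_cases hb : t ∈ uIcc (g a) (g b)
    · obtain ⟨k, ⟨hak, hkb⟩, hk⟩ := ih (fun k hak hkb => hstep k hak (by omega)) hb
      exact ⟨k, ⟨hak, by omega⟩, hk⟩
    · have ht' : t ∈ uIcc (g b) (g (b + 1)) := (uIcc_subset_uIcc_union_uIcc ht).resolve_left hb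
      exact ⟨b + 1, ⟨by omega, le_rfl⟩,
        (abs_sub_right_of_mem_uIcc ht').trans (hstep b hab (by omega))⟩

/-- if `n > L² + 2LA` and `f` is an `(L,A)`-quasi-isometric embedding of
`B_n = {k : ℤ | |k| ≤ n}` (with the metric `|a - b|`) into `ℤ`, then either
`f(-n) < f(0) < f(n)` or `f(n) < f(0) < f(-n)`. -/
theorem stmt1 (L A : ℝ) (hL : 1 ≤ L) (hA : 0 ≤ A) (n : ℤ) (hn : 0 < n)
    (hbig : L ^ 2 + 2 * L * A < (n : ℝ)) (f : ℤ → ℤ)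
    (hf : ∀ a b : ℤ, |a| ≤ n → |b| ≤ n →
      (1 / L) * |(a : ℝ) - (b : ℝ)| - A ≤ |(f a : ℝ) - (f b : ℝ)| ∧
      |(f a : ℝ) - (f b : ℝ)| ≤ L * |(a : ℝ) - (b : ℝ)| + A) :
    (f (-n) < f 0 ∧ f 0 < f n) ∨ (f n < f 0 ∧ f 0 < f (-n)) := by
  have hB : ∀ k, -n ≤ k → k ≤ n → |k| ≤ n := fun k h₁ h₂ => abs_le.2 ⟨h₁, h₂⟩
  have hstep : ∀ k, -n ≤ k → k < n → |(f (k + 1) : ℝ) - f k| ≤ L + A := fun k h₁ h₂ => by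
    simpa using (hf (k + 1) k (hB _ (by omega) (by omega)) (hB k h₁ h₂.le)).2
  have hsep : ∀ j k, |j| ≤ n → |k| ≤ n → n ≤ |j - k| → L + A < |(f j : ℝ) - f k| := by
    intro j k hj hk hjk
    have hjk' : (n : ℝ) ≤ |(j : ℝ) - k| := by exact_mod_cast hjk
    refine lt_of_lt_of_le ?_ (hf j k hj hk).1
    rw [lt_sub_iff_add_lt, one_div_mul_eq_div, lt_div_iff₀ (by linarith)]
    nlinarith
  have hC : 0 ≤ L + A := by linarith
  rcases between_or_mem_uIcc_or_mem_uIcc (f (-n) : ℝ) (f 0) (f n) with h | h | h | h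
  · exact Or.inl (by exact_mod_cast h)
  · exact Or.inr (by exact_mod_cast h)
  · obtain ⟨k, ⟨hk₁, hk₂⟩, hk⟩ := Int.exists_abs_sub_le_of_mem_uIcc (g := fun k => (f k : ℝ))
      hC (by omega) (fun k h₁ h₂ => hstep k h₁ (by omega)) h
    exact absurd hk (hsep k n (hB k hk₁ (by omega)) (hB n (by omega) le_rfl)
      (by rw [le_abs]; omega)).not_ge
  · obtain ⟨k, ⟨hk₁, hk₂⟩, hk⟩ := Int.exists_abs_sub_le_of_mem_uIcc (g := fun k => (f k : ℝ))
      hC hn.le (fun k h₁ h₂ => hstep k (by omega) h₂) h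
    exact absurd hk (hsep k (-n) (hB k (by omega) hk₂) (hB (-n) le_rfl (by omega))
      (by rw [le_abs]; omega)).not_ge
end

section
/- Let G be the graph whose vertex set is {(a,b) ∈ ℤ² : |b| ≤ |a|}, with two vertices adjacent if and only if they differ by 1 in exactly one coordinate. Then G is connected, and G is not coarsely transitive. -/
/-- `f` is an `(L,A)`-quasi-isometric embedding with respect to the
distance functions `dX` and `dY`. -/
def IsQIE {X Y : Type*} (dX : X → X → ℝ) (dY : Y → Y → ℝ) (L A : ℝ) (f : X → Y) : Prop :=
  ∀ a b : X, (1 / L) * dX a b - A ≤ dY (f a) (f b) ∧ dY (f a) (f b) ≤ L * dX a b + A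

/-- `f` is coarsely surjective with respect to the distance function `dY`. -/
def IsCoarselySurj {X Y : Type*} (dY : Y → Y → ℝ) (f : X → Y) : Prop :=
  ∃ C : ℝ, 0 ≤ C ∧ ∀ y : Y, ∃ x : X, dY y (f x) ≤ C

/-- `f` is an `(L,A)`-quasi-isometry. -/
def IsQI {X Y : Type*} (dX : X → X → ℝ) (dY : Y → Y → ℝ) (L A : ℝ) (f : X → Y) : Prop :=
  IsQIE dX dY L A f ∧ IsCoarselySurj dY f

/-- A space with distance function `d` is coarsely transitive if there is `K ≥ 1` such that
any point can be mapped to any other point by a `(K,K)`-quasi-isometry. -/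
def CoarselyTransitive {X : Type*} (d : X → X → ℝ) : Prop :=
  ∃ K : ℝ, 1 ≤ K ∧ ∀ x y : X, ∃ f : X → X, IsQI d d K K f ∧ f x = y

/-- The vertices of the graph: integer points `(a,b)` with `|b| ≤ |a|`. -/
abbrev QuadV : Type := {p : ℤ × ℤ // |p.2| ≤ |p.1|}

/-- Two vertices are related if they differ by `1` in exactly one coordinate. -/
def quadRel (u v : QuadV) : Prop :=
  (u.1.1 = v.1.1 ∧ |u.1.2 - v.1.2| = 1) ∨ (u.1.2 = v.1.2 ∧ |u.1.1 - v.1.1| = 1)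

/-- The graph on `{(a,b) ∈ ℤ² : |b| ≤ |a|}` where two vertices are adjacent iff they
differ by `1` in exactly one coordinate. -/
def quadGraph : SimpleGraph QuadV := SimpleGraph.fromRel quadRel

namespace Quad3

/-- Constructor for vertices. -/
def vtx (a b : ℤ) (h : b.natAbs ≤ a.natAbs) : QuadV :=
  ⟨(a, b), by rw [Int.abs_eq_natAbs, Int.abs_eq_natAbs]; exact_mod_cast h⟩

def origin : QuadV := vtx 0 0 (le_refl _)

/-- The ℓ¹ distance between two vertices. -/
def l1 (u v : QuadV) : ℕ := (u.1.1 - v.1.1).natAbs + (u.1.2 - v.1.2).natAbs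

lemma mem_na (q : QuadV) : q.1.2.natAbs ≤ q.1.1.natAbs := by
  have := q.2; rw [Int.abs_eq_natAbs, Int.abs_eq_natAbs] at this; exact_mod_cast this

lemma l1_comm (u v : QuadV) : l1 u v = l1 v u := by unfold l1; omega

lemma l1_tri (u v w : QuadV) : l1 u w ≤ l1 u v + l1 v w := by unfold l1; omega

lemma eq_of_l1_zero {u v : QuadV} (h : l1 u v = 0) : u = v := by
  unfold l1 at h
  apply Subtype.ext
  have h1 : u.1.1 = v.1.1 := by omega
  have h2 : u.1.2 = v.1.2 := by omega
  exact Prod.ext h1 h2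

lemma adj_coords {u v : QuadV} (h : quadGraph.Adj u v) : l1 u v = 1 := by
  have h' := (SimpleGraph.fromRel_adj quadRel u v).1 h
  unfold l1
  obtain ⟨hne, h'⟩ := h'
  unfold quadRel at h'
  rcases h' with (⟨h1, h2⟩ | ⟨h1, h2⟩) | (⟨h1, h2⟩ | ⟨h1, h2⟩) <;>
    rw [Int.abs_eq_natAbs] at h2 <;> omega

lemma adj_of_rel {u v : QuadV} (hne : u ≠ v) (h : quadRel u v) : quadGraph.Adj u v :=
  (SimpleGraph.fromRel_adj quadRel u v).2 ⟨hne, Or.inl h⟩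

/-- Vertical adjacency. -/
lemma adjV {a b b' : ℤ} {h : b.natAbs ≤ a.natAbs} {h' : b'.natAbs ≤ a.natAbs}
    (hd : (b - b').natAbs = 1) : quadGraph.Adj (vtx a b h) (vtx a b' h') := by
  apply adj_of_rel
  · intro he
    have : b = b' := congrArg (fun q : QuadV => q.1.2) he
    omega
  · left
    refine ⟨rfl, ?_⟩
    show |b - b'| = 1
    rw [Int.abs_eq_natAbs, hd]
    rfl

/-- Horizontal adjacency. -/
lemma adjH {a a' b : ℤ} {h : b.natAbs ≤ a.natAbs} {h' : b.natAbs ≤ a'.natAbs}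
    (hd : (a - a').natAbs = 1) : quadGraph.Adj (vtx a b h) (vtx a' b h') := by
  apply adj_of_rel
  · intro he
    have : a = a' := congrArg (fun q : QuadV => q.1.1) he
    omega
  · right
    refine ⟨rfl, ?_⟩
    show |a - a'| = 1
    rw [Int.abs_eq_natAbs, hd]
    rfl

lemma walk_le {u v : QuadV} (w : quadGraph.Walk u v) : l1 u v ≤ w.length := by
  induction w with
  | nil => simp [l1]
  | @cons a b c h p ih =>
    have h1 : l1 a b = 1 := adj_coords h
    have h2 := l1_tri a b c
    simp only [SimpleGraph.Walk.length_cons]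
    omega

lemma step_origin (q : QuadV) (h : q ≠ origin) :
    ∃ q' : QuadV, quadGraph.Adj q q' ∧ l1 q' origin + 1 = l1 q origin := by
  obtain ⟨⟨a, b⟩, hab⟩ := q
  have hm : b.natAbs ≤ a.natAbs := mem_na ⟨(a, b), hab⟩
  rw [show (⟨(a, b), hab⟩ : QuadV) = vtx a b hm from Subtype.ext rfl] at h ⊢
  have hne : ¬(a = 0 ∧ b = 0) := by
    intro ⟨h1, h2⟩
    exact h (by subst h1; subst h2; rfl)
  rcases lt_trichotomy b 0 with hb | hb | hb
  · refine ⟨vtx a (b + 1) (by omega), adjV (by omega), ?_⟩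
    show (a - 0).natAbs + (b + 1 - 0).natAbs + 1 = (a - 0).natAbs + (b - 0).natAbs
    omega
  · subst hb
    rcases lt_trichotomy a 0 with ha | ha | ha
    · refine ⟨vtx (a + 1) 0 (by omega), adjH (by omega), ?_⟩
      show (a + 1 - 0).natAbs + ((0:ℤ) - 0).natAbs + 1 = (a - 0).natAbs + ((0:ℤ) - 0).natAbs
      omega
    · exact absurd ⟨ha, rfl⟩ hne
    · refine ⟨vtx (a - 1) 0 (by omega), adjH (by omega), ?_⟩
      show (a - 1 - 0).natAbs + ((0:ℤ) - 0).natAbs + 1 = (a - 0).natAbs + ((0:ℤ) - 0).natAbs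
      omega
  · refine ⟨vtx a (b - 1) (by omega), adjV (by omega), ?_⟩
    show (a - 0).natAbs + (b - 1 - 0).natAbs + 1 = (a - 0).natAbs + (b - 0).natAbs
    omega

lemma exists_walk_origin : ∀ (k : ℕ) (q : QuadV), l1 q origin = k →
    ∃ w : quadGraph.Walk q origin, w.length = k := by
  intro k
  induction k with
  | zero =>
    intro q hq
    have : q = origin := eq_of_l1_zero hq
    subst this
    exact ⟨SimpleGraph.Walk.nil, rfl⟩
  | succ k ih =>
    intro q hq
    by_cases h : q = origin
    · subst h
      have : l1 origin origin = 0 := by unfold l1; omega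
      omega
    · obtain ⟨q', hadj, hl⟩ := step_origin q h
      obtain ⟨w, hw⟩ := ih q' (by omega)
      exact ⟨SimpleGraph.Walk.cons hadj w, by simp [hw]⟩

lemma reach_origin (q : QuadV) : quadGraph.Reachable q origin :=
  ⟨(exists_walk_origin _ q rfl).choose⟩

lemma quad_connected : quadGraph.Connected := by
  rw [SimpleGraph.connected_iff]
  exact ⟨fun u v => (reach_origin u).trans (reach_origin v).symm, ⟨origin⟩⟩

lemma l1_le_dist (u v : QuadV) : l1 u v ≤ quadGraph.dist u v := by
  obtain ⟨w, hw⟩ := ((reach_origin u).trans (reach_origin v).symm).exists_walk_length_eq_dist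
  calc l1 u v ≤ w.length := walk_le w
    _ = _ := hw

lemma dist_le_l1_origin (q : QuadV) : quadGraph.dist q origin ≤ l1 q origin := by
  obtain ⟨w, hw⟩ := exists_walk_origin _ q rfl
  exact hw ▸ SimpleGraph.dist_le w

lemma dist_le_through (u v : QuadV) :
    quadGraph.dist u v ≤ l1 u origin + l1 v origin := by
  obtain ⟨w1, h1⟩ := exists_walk_origin _ u rfl
  obtain ⟨w2, h2⟩ := exists_walk_origin _ v rfl
  have := SimpleGraph.dist_le (w1.append w2.reverse)
  rwa [SimpleGraph.Walk.length_append, SimpleGraph.Walk.length_reverse, h1, h2] at this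

lemma origin_mem : ∀ {u v : QuadV} (w : quadGraph.Walk u v),
    0 < u.1.1 → v.1.1 < 0 → origin ∈ w.support := by
  intro u v w
  induction w with
  | nil => intro h1 h2; exact absurd h1 (by omega)
  | @cons a b c h p ih =>
    intro h1 h2
    have hc := adj_coords h
    unfold l1 at hc
    have hb := mem_na b
    rw [SimpleGraph.Walk.support_cons]
    by_cases h0 : 0 < b.1.1
    · exact List.mem_cons_of_mem _ (ih h0 h2)
    · have hb1 : b.1.1 = 0 := by omega
      have hb2 : b.1.2 = 0 := by omega
      have hbo : b = origin := Subtype.ext (Prod.ext hb1 hb2)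
      exact List.mem_cons_of_mem _ (hbo ▸ p.start_mem_support)

lemma cut_dist {u v : QuadV} (hu : 0 < u.1.1) (hv : v.1.1 < 0) :
    l1 u origin + l1 v origin ≤ quadGraph.dist u v := by
  obtain ⟨w, hw⟩ :=
    ((reach_origin u).trans (reach_origin v).symm).exists_walk_length_eq_dist
  have hm := origin_mem w hu hv
  have h1 := walk_le (w.takeUntil origin hm)
  have h2 := walk_le (w.dropUntil origin hm)
  have h3 : (w.takeUntil origin hm).length + (w.dropUntil origin hm).length = w.length := by
    rw [← SimpleGraph.Walk.length_append, SimpleGraph.Walk.take_spec]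
  have h4 := l1_comm origin v
  omega

/-! ### Chains of "good" vertices (far from the basepoint `zn`) -/

section Chains

variable (r₀ : ℕ)

/-- The basepoint `(r₀+2, 0)`. -/
def zn : QuadV := vtx ((r₀ : ℤ) + 2) 0 (by omega)

/-- A vertex is good if it is ℓ¹-far from `zn`. -/
def Good (q : QuadV) : Prop := r₀ + 1 ≤ l1 q (zn r₀)

/-- Steps between adjacent good vertices. -/
def Rel (x y : QuadV) : Prop := quadGraph.Adj x y ∧ Good r₀ x ∧ Good r₀ y

abbrev RTG := Relation.ReflTransGen (Rel r₀)

lemma good_vtx {a b : ℤ} {h : b.natAbs ≤ a.natAbs} :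
    Good r₀ (vtx a b h) ↔ r₀ + 1 ≤ (a - ((r₀ : ℤ) + 2)).natAbs + b.natAbs := by
  unfold Good l1 zn vtx
  constructor <;> intro hx <;> (simp only at hx ⊢; omega)

lemma chainL1 : ∀ (k : ℕ) (a b : ℤ) (_ : a ≤ 0) (hb : b.natAbs ≤ a.natAbs) (_ : b.natAbs = k),
    RTG r₀ (vtx a b hb) (vtx a 0 (by omega)) := by
  intro k
  induction k with
  | zero =>
    intro a b ha hb hk
    have : b = 0 := by omega
    subst this
    exact Relation.ReflTransGen.refl
  | succ k ih =>
    intro a b ha hb hk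
    rcases lt_trichotomy b 0 with hb0 | hb0 | hb0
    · refine Relation.ReflTransGen.head ⟨adjV (b' := b + 1) (h' := by omega) (by omega), ?_, ?_⟩
        (ih a (b + 1) ha (by omega) (by omega))
      · rw [good_vtx]; omega
      · rw [good_vtx]; omega
    · omega
    · refine Relation.ReflTransGen.head ⟨adjV (b' := b - 1) (h' := by omega) (by omega), ?_, ?_⟩
        (ih a (b - 1) ha (by omega) (by omega))
      · rw [good_vtx]; omega
      · rw [good_vtx]; omega

lemma chainL2 : ∀ (k : ℕ) (a : ℤ) (ha : a ≤ 0) (_ : a.natAbs = k),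
    RTG r₀ (vtx a 0 (by omega)) origin := by
  intro k
  induction k with
  | zero =>
    intro a ha hk
    have : a = 0 := by omega
    subst this
    exact Relation.ReflTransGen.refl
  | succ k ih =>
    intro a ha hk
    refine Relation.ReflTransGen.head ⟨adjH (a' := a + 1) (h' := by omega) (by omega), ?_, ?_⟩
      (ih (a + 1) (by omega) (by omega))
    · rw [good_vtx]; omega
    · rw [good_vtx]; omega

lemma chainUp : ∀ (k : ℕ) (a b : ℤ) (h0 : 0 ≤ b) (hba : b + k = a)
    (_ : r₀ + 1 ≤ (a - ((r₀ : ℤ) + 2)).natAbs + b.natAbs),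
    RTG r₀ (vtx a b (by omega)) (vtx a a (by omega)) := by
  intro k
  induction k with
  | zero =>
    intro a b h0 hba hG
    have : b = a := by omega
    subst this
    exact Relation.ReflTransGen.refl
  | succ k ih =>
    intro a b h0 hba hG
    refine Relation.ReflTransGen.head
      ⟨adjV (b' := b + 1) (h := by omega) (h' := by omega) (by omega), ?_, ?_⟩
      (ih a (b + 1) (by omega) (by omega) (by omega))
    · rw [good_vtx]; omega
    · rw [good_vtx]; omega

lemma chainDiag : ∀ (k : ℕ) (a : ℤ) (h0 : 0 ≤ a) (_ : a.natAbs = k),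
    RTG r₀ (vtx a a (by omega)) origin := by
  intro k
  induction k with
  | zero =>
    intro a h0 hk
    have : a = 0 := by omega
    subst this
    exact Relation.ReflTransGen.refl
  | succ k ih =>
    intro a h0 hk
    have h1 : (1:ℤ) ≤ a := by omega
    refine Relation.ReflTransGen.head
      ⟨adjV (b' := a - 1) (h := by omega) (h' := by omega) (by omega), ?_, ?_⟩ ?_
    · rw [good_vtx]; omega
    · rw [good_vtx]; omega
    refine Relation.ReflTransGen.head
      ⟨adjH (a' := a - 1) (h := by omega) (h' := by omega) (by omega), ?_, ?_⟩
      (ih (a - 1) (by omega) (by omega))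
    · rw [good_vtx]; omega
    · rw [good_vtx]; omega

/-- The reflection `(a,b) ↦ (a,-b)`. -/
def negV (q : QuadV) : QuadV := ⟨(q.1.1, -q.1.2), by simpa using q.2⟩

lemma negV_adj {u v : QuadV} (h : quadGraph.Adj u v) : quadGraph.Adj (negV u) (negV v) := by
  obtain ⟨hne, hc⟩ := (SimpleGraph.fromRel_adj quadRel u v).1 h
  apply (SimpleGraph.fromRel_adj quadRel _ _).2
  constructor
  · intro he
    apply hne
    apply Subtype.ext
    have h1 : (negV u).1.1 = (negV v).1.1 := congrArg (fun q : QuadV => q.1.1) he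
    have h2 : (negV u).1.2 = (negV v).1.2 := congrArg (fun q : QuadV => q.1.2) he
    simp only [negV] at h1 h2
    exact Prod.ext h1 (by omega)
  · unfold quadRel at hc ⊢
    simp only [negV]
    have e : ∀ x y : ℤ, |-x - -y| = |x - y| := by
      intro x y
      rw [show -x - -y = y - x by ring, abs_sub_comm]
    rcases hc with (⟨h1, h2⟩ | ⟨h1, h2⟩) | (⟨h1, h2⟩ | ⟨h1, h2⟩)
    · exact Or.inl (Or.inl ⟨h1, by rw [e]; exact h2⟩)
    · exact Or.inl (Or.inr ⟨by rw [h1], h2⟩)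
    · exact Or.inr (Or.inl ⟨h1, by rw [e]; exact h2⟩)
    · exact Or.inr (Or.inr ⟨by rw [h1], h2⟩)

lemma l1_negV (q : QuadV) : l1 (negV q) (zn r₀) = l1 q (zn r₀) := by
  show (q.1.1 - ((r₀ : ℤ) + 2)).natAbs + (-q.1.2 - 0).natAbs
      = (q.1.1 - ((r₀ : ℤ) + 2)).natAbs + (q.1.2 - 0).natAbs
  omega

lemma negV_good {q : QuadV} (h : Good r₀ q) : Good r₀ (negV q) := by
  unfold Good at h ⊢
  rw [l1_negV]
  exact h

lemma negV_rtg {u v : QuadV} (h : RTG r₀ u v) : RTG r₀ (negV u) (negV v) := by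
  induction h with
  | refl => exact Relation.ReflTransGen.refl
  | tail _ hR ih =>
    exact ih.tail ⟨negV_adj hR.1, negV_good r₀ hR.2.1, negV_good r₀ hR.2.2⟩

lemma chain_main (q : QuadV) (hq : Good r₀ q) : RTG r₀ q origin := by
  obtain ⟨⟨a, b⟩, hab⟩ := q
  have hm : b.natAbs ≤ a.natAbs := mem_na ⟨(a, b), hab⟩
  rw [show (⟨(a, b), hab⟩ : QuadV) = vtx a b hm from Subtype.ext rfl] at hq ⊢
  rw [good_vtx] at hq
  rcases le_or_gt a 0 with ha | ha
  · exact (chainL1 r₀ b.natAbs a b ha hm rfl).trans (chainL2 r₀ a.natAbs a ha rfl)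
  · rcases le_or_gt 0 b with hb | hb
    · exact (chainUp r₀ (a - b).toNat a b hb (by omega) (by omega)).trans
        (chainDiag r₀ a.natAbs a (by omega) rfl)
    · have hchain : RTG r₀ (vtx a (-b) (by omega)) origin :=
        (chainUp r₀ (a + b).toNat a (-b) (by omega) (by omega) (by omega)).trans
          (chainDiag r₀ a.natAbs a (by omega) rfl)
      have := negV_rtg r₀ hchain
      have e1 : negV (vtx a (-b) (by omega)) = vtx a b hm := Subtype.ext (by simp [negV, vtx])
      have e2 : negV origin = origin := Subtype.ext rfl
      rwa [e1, e2] at this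

lemma good_origin : Good r₀ origin := by
  show Good r₀ (vtx 0 0 (le_refl _))
  rw [good_vtx]
  omega

end Chains

/-! ### Main argument -/

/-- Points on the horizontal axis. -/
def axis (m : ℤ) : QuadV := vtx m 0 (Nat.zero_le _)

lemma axis_l1 (m : ℤ) : l1 (axis m) origin = m.natAbs := by
  show (m - 0).natAbs + ((0:ℤ) - 0).natAbs = m.natAbs
  omega

theorem not_ct : ¬ CoarselyTransitive (fun u v : QuadV => (quadGraph.dist u v : ℝ)) := by
  rintro ⟨K, hK, hCT⟩
  have hK0 : (0:ℝ) < K := lt_of_lt_of_le one_pos hK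
  set r₀ : ℕ := ⌈3 * K ^ 2⌉₊ with hr₀def
  have hr₀K : 3 * K ^ 2 ≤ (r₀ : ℝ) := Nat.le_ceil _
  obtain ⟨f, ⟨hQIE, C, hC0, hsurj⟩, hfz⟩ := hCT (zn r₀) origin
  -- images of good points are far from the origin
  have hGoodFar : ∀ q : QuadV, Good r₀ q → 2 * K < (quadGraph.dist (f q) origin : ℝ) := by
    intro q hq
    have h1 : ((r₀ : ℝ) + 1) ≤ (quadGraph.dist q (zn r₀) : ℝ) := by
      have h2 := l1_le_dist q (zn r₀)
      have h3 : r₀ + 1 ≤ quadGraph.dist q (zn r₀) := le_trans hq h2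
      exact_mod_cast h3
    have h2 := (hQIE q (zn r₀)).1
    rw [hfz] at h2
    simp only [] at h2
    have hmono : (1 / K) * ((r₀ : ℝ) + 1) ≤ (1 / K) * (quadGraph.dist q (zn r₀) : ℝ) :=
      mul_le_mul_of_nonneg_left h1 (by positivity)
    have e1 : (1 / K) * (3 * K ^ 2 + 1) = 3 * K + 1 / K := by
      field_simp
    have h4 : (1 / K) * (3 * K ^ 2 + 1) ≤ (1 / K) * ((r₀ : ℝ) + 1) :=
      mul_le_mul_of_nonneg_left (by linarith) (by positivity)
    have h5 : (0:ℝ) < 1 / K := by positivity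
    linarith
  have hfst : ∀ q : QuadV, Good r₀ q → (f q).1.1 ≠ 0 := by
    intro q hq h0
    have hmem := mem_na (f q)
    have heq : f q = origin := Subtype.ext (Prod.ext h0 (by show (f q).1.2 = (0:ℤ); omega))
    have h1 := hGoodFar q hq
    rw [heq, SimpleGraph.dist_self] at h1
    norm_num at h1
    linarith
  have key : ∀ u v : QuadV, (quadGraph.dist u v : ℝ) ≤ 2 * K →
      2 * K < (quadGraph.dist u origin : ℝ) → 2 * K < (quadGraph.dist v origin : ℝ) →
      0 < u.1.1 → v.1.1 < 0 → False := by
    intro u v huv hu hv hup hvn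
    have hcut := cut_dist hup hvn
    have h1 := dist_le_l1_origin u
    have h2 := dist_le_l1_origin v
    have h3 : quadGraph.dist u origin + quadGraph.dist v origin ≤ quadGraph.dist u v := by omega
    have h4 : (quadGraph.dist u origin : ℝ) + (quadGraph.dist v origin : ℝ)
        ≤ (quadGraph.dist u v : ℝ) := by exact_mod_cast h3
    linarith
  have hstep : ∀ x y : QuadV, Rel r₀ x y → (0 < (f x).1.1 ↔ 0 < (f y).1.1) := by
    rintro x y ⟨hadj, hx, hy⟩
    have hd1 : quadGraph.dist x y ≤ 1 := le_of_eq (SimpleGraph.dist_eq_one_iff_adj.2 hadj)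
    have hup := (hQIE x y).2
    simp only [] at hup
    have hc : (quadGraph.dist x y : ℝ) ≤ 1 := by exact_mod_cast hd1
    have hm : K * (quadGraph.dist x y : ℝ) ≤ K * 1 := mul_le_mul_of_nonneg_left hc hK0.le
    have h2 : (quadGraph.dist (f x) (f y) : ℝ) ≤ 2 * K := by linarith
    have hyx : (quadGraph.dist (f y) (f x) : ℝ) ≤ 2 * K := by
      rw [SimpleGraph.dist_comm]
      exact h2
    have hfx := hGoodFar x hx
    have hfy := hGoodFar y hy
    have hfx0 := hfst x hx
    have hfy0 := hfst y hy
    constructor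
    · intro hpos
      rcases lt_trichotomy ((f y).1.1) 0 with hn | h0 | hp
      · exact (key (f x) (f y) h2 hfx hfy hpos hn).elim
      · exact absurd h0 hfy0
      · exact hp
    · intro hpos
      rcases lt_trichotomy ((f x).1.1) 0 with hn | h0 | hp
      · exact (key (f y) (f x) hyx hfy hfx hpos hn).elim
      · exact absurd h0 hfx0
      · exact hp
  have hRTGiff : ∀ {x y : QuadV}, RTG r₀ x y → (0 < (f x).1.1 ↔ 0 < (f y).1.1) := by
    intro x y h
    induction h with
    | refl => exact Iff.rfl
    | tail _ hR ih => exact ih.trans (hstep _ _ hR)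
  have hznl1 : l1 (zn r₀) origin = r₀ + 2 := by
    show ((r₀:ℤ) + 2 - 0).natAbs + ((0:ℤ) - 0).natAbs = r₀ + 2
    omega
  have hNear : ∀ q : QuadV, ¬ Good r₀ q →
      (quadGraph.dist (f q) origin : ℝ) ≤ K * (3 * (r₀:ℝ) + 4) + K := by
    intro q hq
    have h1 : l1 q (zn r₀) ≤ r₀ := by unfold Good at hq; omega
    have h2 := dist_le_through q (zn r₀)
    have h3 := l1_tri q (zn r₀) origin
    have h4 : quadGraph.dist q (zn r₀) ≤ 3 * r₀ + 4 := by omega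
    have hup := (hQIE q (zn r₀)).2
    rw [hfz] at hup
    simp only [] at hup
    have hc : (quadGraph.dist q (zn r₀) : ℝ) ≤ 3 * (r₀:ℝ) + 4 := by exact_mod_cast h4
    have hm : K * (quadGraph.dist q (zn r₀) : ℝ) ≤ K * (3 * (r₀:ℝ) + 4) :=
      mul_le_mul_of_nonneg_left hc hK0.le
    linarith
  set B : ℝ := K * (3 * (r₀:ℝ) + 4) + K with hBdef
  have hB0 : (0:ℝ) ≤ B := by
    have h1 : (0:ℝ) ≤ 3 * (r₀:ℝ) + 4 := by positivity
    have h2 : (0:ℝ) ≤ K * (3 * (r₀:ℝ) + 4) := mul_nonneg hK0.le h1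
    linarith
  set M : ℕ := ⌈C + B⌉₊ + 1 with hMdef
  have hM : C + B < (M : ℝ) := by
    have h1 := Nat.le_ceil (C + B)
    rw [hMdef]
    push_cast
    linarith
  have hM1 : 1 ≤ M := by omega
  rcases lt_trichotomy ((f origin).1.1) 0 with hneg | hzero | hpos
  · -- all good points map to the left; take a far right point
    have hall : ∀ q : QuadV, Good r₀ q → (f q).1.1 < 0 := by
      intro q hq
      have hiff := hRTGiff (chain_main r₀ q hq)
      have h0 := hfst q hq
      rcases lt_trichotomy ((f q).1.1) 0 with h | h | h
      · exact h
      · exact absurd h h0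
      · exact absurd (hiff.1 h) (by omega)
    obtain ⟨q, hqC⟩ := hsurj (axis (M:ℤ))
    simp only [] at hqC
    have hl1w : l1 (axis (M:ℤ)) origin = M := by rw [axis_l1]; omega
    by_cases hGq : Good r₀ q
    · have hq1 : (f q).1.1 < 0 := hall q hGq
      have hw : 0 < (axis (M:ℤ)).1.1 := by show (0:ℤ) < (M:ℤ); omega
      have hcut := cut_dist hw hq1
      have h6 : M ≤ quadGraph.dist (axis (M:ℤ)) (f q) := by omega
      have h7 : (M:ℝ) ≤ (quadGraph.dist (axis (M:ℤ)) (f q) : ℝ) := by exact_mod_cast h6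
      linarith
    · have h8 := hNear q hGq
      have htri : quadGraph.dist (axis (M:ℤ)) origin
          ≤ quadGraph.dist (axis (M:ℤ)) (f q) + quadGraph.dist (f q) origin :=
        quad_connected.dist_triangle
      have hlow : M ≤ quadGraph.dist (axis (M:ℤ)) origin := by
        have := l1_le_dist (axis (M:ℤ)) origin
        omega
      have h9 : (M:ℝ) ≤ (quadGraph.dist (axis (M:ℤ)) (f q) : ℝ)
          + (quadGraph.dist (f q) origin : ℝ) := by
        exact_mod_cast le_trans hlow htri
      linarith
  · exact hfst origin (good_origin r₀) hzero
  · -- all good points map to the right; take a far left point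
    have hall : ∀ q : QuadV, Good r₀ q → 0 < (f q).1.1 := fun q hq =>
      (hRTGiff (chain_main r₀ q hq)).2 hpos
    obtain ⟨q, hqC⟩ := hsurj (axis (-(M:ℤ)))
    simp only [] at hqC
    have hl1w : l1 (axis (-(M:ℤ))) origin = M := by rw [axis_l1]; omega
    by_cases hGq : Good r₀ q
    · have hq1 : 0 < (f q).1.1 := hall q hGq
      have hw : (axis (-(M:ℤ))).1.1 < 0 := by show -(M:ℤ) < 0; omega
      have hcut := cut_dist hq1 hw
      have h6 : M ≤ quadGraph.dist (f q) (axis (-(M:ℤ))) := by omega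
      have h7 : (M:ℝ) ≤ (quadGraph.dist (f q) (axis (-(M:ℤ))) : ℝ) := by exact_mod_cast h6
      rw [SimpleGraph.dist_comm] at h7
      linarith
    · have h8 := hNear q hGq
      have htri : quadGraph.dist (axis (-(M:ℤ))) origin
          ≤ quadGraph.dist (axis (-(M:ℤ))) (f q) + quadGraph.dist (f q) origin :=
        quad_connected.dist_triangle
      have hlow : M ≤ quadGraph.dist (axis (-(M:ℤ))) origin := by
        have := l1_le_dist (axis (-(M:ℤ))) origin
        omega
      have h9 : (M:ℝ) ≤ (quadGraph.dist (axis (-(M:ℤ))) (f q) : ℝ)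
          + (quadGraph.dist (f q) origin : ℝ) := by
        exact_mod_cast le_trans hlow htri
      linarith

end Quad3

/-- the graph on `{(a,b) ∈ ℤ² : |b| ≤ |a|}` is connected but not
coarsely transitive (with respect to its shortest-path distance). -/
theorem stmt3 :
    quadGraph.Connected ∧
    ¬ CoarselyTransitive (fun u v : QuadV => (quadGraph.dist u v : ℝ)) :=
  ⟨Quad3.quad_connected, Quad3.not_ct⟩
end

section
/- Let X be an infinite, locally finite, connected graph containing a bi-infinite geodesic (x_n)_{n∈ℤ} with d(x_m,x_n) = |m − n|, let 0 < α ≤ 1, and let x₀ = x_0. Then for every integer n ≥ 1, |B_X(x₀,n)| ≤ |B_{X_α}(x₀,n)| ≤ 2·|B_X(x₀,n)|, where B_X(x₀,n) is the ball of radius n about x₀ in X and B_{X_α}(x₀,n) is the ball of radius n about x₀ in X_α. In particular, X and X_α have the same growth rate. -/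
/-- The shortest-path distance of a graph, as a real-valued distance function. -/
noncomputable def gdist {V : Type*} (G : SimpleGraph V) : V → V → ℝ :=
  fun u v => (G.dist u v : ℝ)

/-- The closed ball of radius `r` about `x` in the shortest-path metric. -/
def gball {V : Type*} (G : SimpleGraph V) (x : V) (r : ℕ) : Set V :=
  {v | G.dist x v ≤ r}

/-- `g_α(n) = ⌈(log n)^α⌉`, the length of the segment attached at `x_{n²}`. -/
noncomputable def glen (α : ℝ) (n : ℕ) : ℤ := ⌈Real.log (n : ℝ) ^ α⌉

/-- The vertex set of `X_α`: vertices of `X` together with the new segment vertices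
`k_n` for `n ≥ 1` and `1 ≤ k ≤ g_α(n)`. -/
def XaV (α : ℝ) (V : Type*) : Type _ :=
  V ⊕ {p : ℕ × ℕ // 1 ≤ p.1 ∧ 1 ≤ p.2 ∧ (p.2 : ℤ) ≤ glen α p.1}

/-- The adjacency relation of `X_α`: the adjacencies of `X`, the vertex `1_n` is
attached to `0_n = x_{n²}`, and `k_n` is adjacent to `(k+1)_n`. -/
def xaRel (α : ℝ) {V : Type*} (G : SimpleGraph V) (x : ℤ → V) :
    XaV α V → XaV α V → Prop
  | Sum.inl u, Sum.inl v => G.Adj u v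
  | Sum.inl u, Sum.inr p => p.1.2 = 1 ∧ u = x ((p.1.1 : ℤ) ^ 2)
  | Sum.inr p, Sum.inl u => p.1.2 = 1 ∧ u = x ((p.1.1 : ℤ) ^ 2)
  | Sum.inr p, Sum.inr q => p.1.1 = q.1.1 ∧ (p.1.2 + 1 = q.1.2 ∨ q.1.2 + 1 = p.1.2)

/-- The graph `X_α`, obtained from `X` by attaching, for each `n ≥ 1`, a segment of
length `g_α(n)` at the vertex `x_{n²}` of the chosen bi-infinite geodesic. -/
def Xa (α : ℝ) {V : Type*} (G : SimpleGraph V) (x : ℤ → V) : SimpleGraph (XaV α V) :=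
  SimpleGraph.fromRel (xaRel α G x)

namespace SimpleGraph

variable {V W : Type*} {G : SimpleGraph V} {H : SimpleGraph W}

theorem dist_le_dist_of_forall_adj (hH : H.Connected) {f : V → W}
    (hf : ∀ a b, G.Adj a b → H.dist (f a) (f b) ≤ 1) {a b : V} (hab : G.Reachable a b) :
    H.dist (f a) (f b) ≤ G.dist a b := by
  obtain ⟨p, hp⟩ := hab.exists_walk_length_eq_dist
  rw [← hp]
  clear hp hab
  induction p with
  | nil => simp
  | @cons a c b h q ih =>
    calc H.dist (f a) (f b) ≤ H.dist (f a) (f c) + H.dist (f c) (f b) := hH.dist_triangle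
      _ ≤ 1 + q.length := Nat.add_le_add (hf a c h) ih
      _ = (Walk.cons h q).length := by rw [Walk.length_cons, Nat.add_comm]

end SimpleGraph

section Ball

variable {V : Type*} {G : SimpleGraph V}

open SimpleGraph

theorem gball_mono {x : V} {r s : ℕ} (h : r ≤ s) : gball G x r ⊆ gball G x s :=
  fun _ hv => le_trans hv (by exact_mod_cast h)

theorem gball_succ_subset (hG : G.Preconnected) (x : V) (n : ℕ) :
    gball G x (n + 1) ⊆ insert x (⋃ w ∈ G.neighborSet x, gball G w n) := by
  intro v hv
  obtain ⟨p, hp⟩ := (hG x v).exists_walk_length_eq_dist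
  cases p with
  | nil => exact Set.mem_insert _ _
  | cons h q =>
    refine Set.mem_insert_of_mem _ (Set.mem_biUnion h ?_)
    have hq := G.dist_le q
    simp only [gball, Set.mem_ofPred_eq, Walk.length_cons] at hv hp ⊢
    omega

theorem finite_gball (hlf : ∀ v, (G.neighborSet v).Finite) (hG : G.Preconnected) (x : V)
    (n : ℕ) : (gball G x n).Finite := by
  induction n generalizing x with
  | zero =>
    refine (Set.finite_singleton x).subset fun v hv => ?_
    exact (((hG x v).dist_eq_zero_iff).1 (Nat.le_zero.1 hv)).symm
  | succ n ih =>
    exact ((hlf x).biUnion fun w _ => ih w).insert x |>.subset (gball_succ_subset hG x n)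

end Ball

namespace Set

variable {α β γ : Type*} {s : Set (α ⊕ β)} {t : Set γ} {f : α ⊕ β → γ}

theorem Finite.of_mapsTo_sum (hst : MapsTo f s t) (hl : (f ∘ Sum.inl).Injective)
    (hr : (f ∘ Sum.inr).Injective) (ht : t.Finite) : s.Finite := by
  rw [← image_preimage_inl_union_image_preimage_inr s]
  exact ((Finite.of_injOn (f := f ∘ Sum.inl) (fun a ha => hst ha) hl.injOn ht).image _).union
    ((Finite.of_injOn (f := f ∘ Sum.inr) (fun b hb => hst hb) hr.injOn ht).image _)

theorem ncard_le_two_mul_of_mapsTo_sum (hst : MapsTo f s t) (hl : (f ∘ Sum.inl).Injective)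
    (hr : (f ∘ Sum.inr).Injective) (ht : t.Finite) : s.ncard ≤ 2 * t.ncard := by
  calc s.ncard = (Sum.inl '' (Sum.inl ⁻¹' s) ∪ Sum.inr '' (Sum.inr ⁻¹' s)).ncard := by
        rw [image_preimage_inl_union_image_preimage_inr]
    _ ≤ (Sum.inl ⁻¹' s).ncard + (Sum.inr ⁻¹' s).ncard := by
        refine (ncard_union_le _ _).trans_eq ?_
        rw [ncard_image_of_injective _ Sum.inl_injective,
          ncard_image_of_injective _ Sum.inr_injective]
    _ ≤ t.ncard + t.ncard := Nat.add_le_add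
        (ncard_le_ncard_of_injOn _ (fun a ha => hst ha) hl.injOn ht)
        (ncard_le_ncard_of_injOn _ (fun b hb => hst hb) hr.injOn ht)
    _ = 2 * t.ncard := (two_mul _).symm

end Set

theorem Nat.eq_and_eq_of_sq_add_eq_sq_add {m k m' k' : ℕ} (hk : k ≤ 2 * m)
    (hk' : k' ≤ 2 * m') (h : m ^ 2 + k = m' ^ 2 + k') : m = m' ∧ k = k' := by
  have hm : m = m' := by
    rw [← Nat.sqrt_add_eq' m (a := k) (by omega), h, Nat.sqrt_add_eq' m' (by omega)]
  subst hm
  exact ⟨rfl, by omega⟩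

section Xa

variable {V : Type*} {G : SimpleGraph V} {x : ℤ → V} {α : ℝ}

theorem glen_le_self (hα : 0 < α) (hα1 : α ≤ 1) {m : ℕ} (hm : 1 ≤ m) : glen α m ≤ m := by
  have hm1 : (1 : ℝ) ≤ m := by exact_mod_cast hm
  have hlog : 0 ≤ Real.log m := Real.log_nonneg hm1
  rw [glen, Int.ceil_le, Int.cast_natCast]
  rcases le_or_gt (Real.log m) 1 with h | h
  · exact (Real.rpow_le_one hlog h hα.le).trans hm1
  · calc Real.log m ^ α ≤ Real.log m ^ (1 : ℝ) := Real.rpow_le_rpow_of_exponent_le h.le hα1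
      _ = Real.log m := Real.rpow_one _
      _ ≤ m - 1 := Real.log_le_sub_one_of_pos (by linarith)
      _ ≤ m := by linarith

theorem injective_of_dist_eq (hgeo : ∀ m n : ℤ, G.dist (x m) (x n) = (m - n).natAbs) :
    Function.Injective x := fun m n h => by
  have := hgeo m n
  rw [h, SimpleGraph.dist_self] at this
  omega

def xaIncl (α : ℝ) {V : Type*} (G : SimpleGraph V) (x : ℤ → V) : G →g Xa α G x where
  toFun := Sum.inl
  map_rel' h := ⟨fun he => h.ne (Sum.inl_injective he), Or.inl h⟩

def xaProj (α : ℝ) {V : Type*} (x : ℤ → V) : XaV α V → V :=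
  Sum.elim id fun q => x ((q.1.1 : ℤ) ^ 2 + q.1.2)

theorem xaProj_dist_le_one_of_rel (hgeo : ∀ m n : ℤ, G.dist (x m) (x n) = (m - n).natAbs)
    {a b : XaV α V} (h : xaRel α G x a b) : G.dist (xaProj α x a) (xaProj α x b) ≤ 1 := by
  match a, b, h with
  | .inl u, .inl v, h => exact (SimpleGraph.dist_eq_one_iff_adj.2 h).le
  | .inl u, .inr q, ⟨hk, hu⟩ | .inr q, .inl u, ⟨hk, hu⟩ =>
    simp only [xaProj, Sum.elim_inl, Sum.elim_inr, id, hu, hgeo, hk]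
    omega
  | .inr q, .inr q', ⟨hm, hk⟩ => simp only [xaProj, Sum.elim_inr, hgeo, hm]; omega

theorem xaProj_dist_le_one (hgeo : ∀ m n : ℤ, G.dist (x m) (x n) = (m - n).natAbs)
    (a b : XaV α V) (h : (Xa α G x).Adj a b) : G.dist (xaProj α x a) (xaProj α x b) ≤ 1 :=
  h.2.elim (xaProj_dist_le_one_of_rel hgeo) fun h' =>
    SimpleGraph.dist_comm (G := G) ▸ xaProj_dist_le_one_of_rel hgeo h'

theorem xaProj_comp_inr_injective (hgeo : ∀ m n : ℤ, G.dist (x m) (x n) = (m - n).natAbs)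
    (hα : 0 < α) (hα1 : α ≤ 1) : (xaProj α x ∘ Sum.inr).Injective := by
  rintro ⟨⟨m, k⟩, hm, _, hk⟩ ⟨⟨m', k'⟩, hm', _, hk'⟩ h
  have hkm := hk.trans (glen_le_self hα hα1 hm)
  have hkm' := hk'.trans (glen_le_self hα hα1 hm')
  have hsum : m ^ 2 + k = m' ^ 2 + k' := by exact_mod_cast injective_of_dist_eq hgeo h
  obtain ⟨rfl, rfl⟩ := Nat.eq_and_eq_of_sq_add_eq_sq_add (by omega) (by omega) hsum
  rfl

theorem xa_reachable_inr (q : {p : ℕ × ℕ // 1 ≤ p.1 ∧ 1 ≤ p.2 ∧ (p.2 : ℤ) ≤ glen α p.1}) :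
    (Xa α G x).Reachable (.inl (x ((q.1.1 : ℤ) ^ 2))) (.inr q) := by
  obtain ⟨⟨m, k⟩, hm, hk, hkg⟩ := q
  induction k with
  | zero => omega
  | succ k ih =>
    rcases Nat.eq_zero_or_pos k with rfl | hk0
    · exact SimpleGraph.Adj.reachable ⟨Sum.inl_ne_inr, Or.inl ⟨rfl, rfl⟩⟩
    · refine (ih hm hk0 (by dsimp only at hkg ⊢; push_cast at hkg; omega)).trans
        (SimpleGraph.Adj.reachable
          ⟨fun h => by injection h with h; simp at h, Or.inl ⟨rfl, Or.inl rfl⟩⟩)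

theorem xa_connected (hconn : G.Connected) : (Xa α G x).Connected := by
  rw [SimpleGraph.connected_iff_exists_forall_reachable]
  have hinl (u : V) : (Xa α G x).Reachable (.inl (x 0)) (.inl u) :=
    (hconn.preconnected _ _).map (xaIncl α G x)
  refine ⟨.inl (x 0), fun a => ?_⟩
  cases a with
  | inl u => exact hinl u
  | inr q => exact (hinl _).trans (xa_reachable_inr q)

variable (hconn : G.Connected) (hgeo : ∀ m n : ℤ, G.dist (x m) (x n) = (m - n).natAbs)
include hconn

theorem inl_mem_gball_xa {n : ℕ} {u : V} (hu : u ∈ gball G (x 0) n) :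
    (Sum.inl u : XaV α V) ∈ gball (Xa α G x) (.inl (x 0)) n :=
  le_trans (SimpleGraph.dist_le_dist_of_forall_adj (xa_connected hconn)
    (fun _ _ h => (SimpleGraph.dist_eq_one_iff_adj.2 ((xaIncl α G x).map_adj h)).le)
    (hconn.preconnected _ _)) hu

include hgeo

theorem mapsTo_xaProj_gball (n : ℕ) :
    Set.MapsTo (xaProj α x) (gball (Xa α G x) (.inl (x 0)) n) (gball G (x 0) n) :=
  fun _ ha => le_trans (SimpleGraph.dist_le_dist_of_forall_adj hconn
    (xaProj_dist_le_one hgeo) ((xa_connected hconn).preconnected _ _)) ha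

variable (hlf : ∀ v : V, (G.neighborSet v).Finite) (hα : 0 < α) (hα1 : α ≤ 1)
include hlf hα hα1

theorem finite_gball_xa (n : ℕ) : (gball (Xa α G x) (.inl (x 0)) n).Finite :=
  Set.Finite.of_mapsTo_sum (mapsTo_xaProj_gball hconn hgeo n) Function.injective_id
    (xaProj_comp_inr_injective hgeo hα hα1) (finite_gball hlf hconn.preconnected _ n)

theorem ncard_gball_le_ncard_gball_xa (n : ℕ) :
    (gball G (x 0) n).ncard ≤ (gball (Xa α G x) (.inl (x 0)) n).ncard :=
  Set.ncard_le_ncard_of_injOn Sum.inl (fun _ hu => inl_mem_gball_xa hconn hu)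
    Sum.inl_injective.injOn (finite_gball_xa hconn hgeo hlf hα hα1 n)

theorem ncard_gball_xa_le_two_mul (n : ℕ) :
    (gball (Xa α G x) (.inl (x 0)) n).ncard ≤ 2 * (gball G (x 0) n).ncard :=
  Set.ncard_le_two_mul_of_mapsTo_sum (mapsTo_xaProj_gball hconn hgeo n) Function.injective_id
    (xaProj_comp_inr_injective hgeo hα hα1) (finite_gball hlf hconn.preconnected _ n)

end Xa

theorem stmt9_general {V : Type*} (G : SimpleGraph V)
    (hlf : ∀ v : V, (G.neighborSet v).Finite) (hconn : G.Connected)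
    (x : ℤ → V) (hgeo : ∀ m n : ℤ, G.dist (x m) (x n) = (m - n).natAbs)
    (α : ℝ) (hα : 0 < α) (hα1 : α ≤ 1) :
    (∀ n : ℕ, 1 ≤ n →
      (gball G (x 0) n).ncard ≤ (gball (Xa α G x) (Sum.inl (x 0)) n).ncard ∧
      (gball (Xa α G x) (Sum.inl (x 0)) n).ncard ≤ 2 * (gball G (x 0) n).ncard) ∧
    (∃ c : ℕ, 0 < c ∧ ∀ n : ℕ,
      (gball G (x 0) n).ncard ≤ c * (gball (Xa α G x) (Sum.inl (x 0)) (c * n + c)).ncard ∧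
      (gball (Xa α G x) (Sum.inl (x 0)) n).ncard ≤ c * (gball G (x 0) (c * n + c)).ncard) := by
  have lower := ncard_gball_le_ncard_gball_xa hconn hgeo hlf hα hα1
  have upper := ncard_gball_xa_le_two_mul hconn hgeo hlf hα hα1
  refine ⟨fun n _ => ⟨lower n, upper n⟩, 2, two_pos, fun n => ⟨?_, ?_⟩⟩
  · calc (gball G (x 0) n).ncard ≤ (gball (Xa α G x) (.inl (x 0)) n).ncard := lower n
      _ ≤ (gball (Xa α G x) (.inl (x 0)) (2 * n + 2)).ncard :=
          Set.ncard_le_ncard (gball_mono (by omega))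
            (finite_gball_xa hconn hgeo hlf hα hα1 _)
      _ ≤ 2 * (gball (Xa α G x) (.inl (x 0)) (2 * n + 2)).ncard :=
          Nat.le_mul_of_pos_left _ two_pos
  · calc (gball (Xa α G x) (.inl (x 0)) n).ncard ≤ 2 * (gball G (x 0) n).ncard := upper n
      _ ≤ 2 * (gball G (x 0) (2 * n + 2)).ncard := Nat.mul_le_mul_left _ <|
          Set.ncard_le_ncard (gball_mono (by omega))
            (finite_gball hlf hconn.preconnected _ _)

/-- for every `n ≥ 1`,
`|B_X(x₀,n)| ≤ |B_{X_α}(x₀,n)| ≤ 2|B_X(x₀,n)|` where `x₀ = x 0`; in particular `X` and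
`X_α` have equivalent growth functions. -/
theorem stmt9 {V : Type*} (G : SimpleGraph V) [Infinite V]
    (hlf : ∀ v : V, (G.neighborSet v).Finite) (hconn : G.Connected)
    (x : ℤ → V) (hgeo : ∀ m n : ℤ, G.dist (x m) (x n) = (m - n).natAbs)
    (α : ℝ) (hα : 0 < α) (hα1 : α ≤ 1) :
    (∀ n : ℕ, 1 ≤ n →
      (gball G (x 0) n).ncard ≤ (gball (Xa α G x) (Sum.inl (x 0)) n).ncard ∧
      (gball (Xa α G x) (Sum.inl (x 0)) n).ncard ≤ 2 * (gball G (x 0) n).ncard) ∧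
    (∃ c : ℕ, 0 < c ∧ ∀ n : ℕ,
      (gball G (x 0) n).ncard ≤ c * (gball (Xa α G x) (Sum.inl (x 0)) (c * n + c)).ncard ∧
      (gball (Xa α G x) (Sum.inl (x 0)) n).ncard ≤ c * (gball G (x 0) (c * n + c)).ncard) :=
  stmt9_general G hlf hconn x hgeo α hα hα1
end

section
/- Let X be an infinite, locally finite, connected graph containing a bi-infinite geodesic (x_n)_{n∈ℤ} with d(x_m,x_n) = |m − n|, let 0 < α ≤ 1, and let x₀ = x_0. Then for every integer n ≥ 1, |S_{X_α}(x₀,n)| ≤ |S_X(x₀,n)| + 1, where S_X(x₀,n) is the set of vertices of X at distance exactly n from x₀ in X, and S_{X_α}(x₀,n) is the set of vertices of X_α at distance exactly n from x₀ in X_α. -/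
/-- The sphere of radius `r` about `x` in the shortest-path metric of `G`
(for `r ≥ 1`, it consists of the vertices at distance exactly `r` from `x`). -/
def gsphere {V : Type*} (G : SimpleGraph V) (x : V) (r : ℕ) : Set V :=
  {v | G.dist x v = r}

/-
The attached segments do not change distances inside `X`, and the vertex `k_m` lies at distance
exactly `m² + k` from `x₀`: the height function equal to `d_X(x₀, ·)` on `X` and to `m² + k` on
`k_m` grows by at most one along each edge, and this bound is attained. Since
`k ≤ g_α(m) ≤ m < 2m + 1`, the pair `(m, k)` is recovered from `m² + k` (as `m = ⌊√(m² + k)⌋`),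
so each sphere of `X_α` consists of the sphere of `X` and at most one new vertex.
-/

namespace SimpleGraph

variable {V W : Type*} {G : SimpleGraph V} {u v w : V}

lemma Adj.dist_le_dist_add_one (h : G.Adj v w) (u : V) : G.dist u w ≤ G.dist u v + 1 := by
  simpa [dist_eq_one_iff_adj.mpr h] using h.reachable.dist_triangle_right u

lemma Reachable.dist_map_le {G' : SimpleGraph W} (f : G →g G') (h : G.Reachable u v) :
    G'.dist (f u) (f v) ≤ G.dist u v := by
  obtain ⟨p, hp⟩ := h.exists_walk_length_eq_dist
  simpa [hp] using dist_le (p.map f)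

lemma Walk.le_add_length {f : V → ℕ} (hf : ∀ a b, G.Adj a b → f b ≤ f a + 1)
    (p : G.Walk u v) : f v ≤ f u + p.length := by
  induction p with
  | nil => simp
  | cons hadj _ ih => have := hf _ _ hadj; rw [Walk.length_cons]; omega

lemma Reachable.le_add_dist {f : V → ℕ} (hf : ∀ a b, G.Adj a b → f b ≤ f a + 1)
    (h : G.Reachable u v) : f v ≤ f u + G.dist u v := by
  obtain ⟨p, hp⟩ := h.exists_walk_length_eq_dist
  exact hp ▸ p.le_add_length hf

lemma Connected.finite_setOf_dist_le (hlf : ∀ v, (G.neighborSet v).Finite)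
    (hconn : G.Connected) (c : V) (n : ℕ) : {v | G.dist c v ≤ n}.Finite := by
  induction n with
  | zero => simp [hconn.dist_eq_zero_iff]
  | succ n ih =>
    refine (ih.union (ih.biUnion fun u _ ↦ hlf u)).subset fun v hv ↦ ?_
    rcases Nat.lt_or_eq_of_le (show G.dist c v ≤ n + 1 from hv) with hlt | heq
    · exact .inl (Nat.le_of_lt_succ hlt)
    obtain ⟨p, hp⟩ := (hconn v c).exists_walk_length_eq_dist
    cases p with
    | nil => simp at heq
    | cons hadj q =>
      refine .inr (Set.mem_biUnion (x := _) ?_ hadj.symm)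
      have := dist_le q
      rw [Walk.length_cons, dist_comm, heq] at hp
      rw [Set.mem_ofPred_eq, dist_comm]
      omega

lemma Connected.finite_gsphere (hlf : ∀ v, (G.neighborSet v).Finite) (hconn : G.Connected)
    (c : V) (n : ℕ) : (gsphere G c n).Finite :=
  (hconn.finite_setOf_dist_le hlf c n).subset fun _ hv ↦ le_of_eq hv

end SimpleGraph

lemma Nat.eq_of_sq_add_eq {m k m' k' : ℕ} (hk : k ≤ m + m) (hk' : k' ≤ m' + m')
    (h : m ^ 2 + k = m' ^ 2 + k') : m = m' ∧ k = k' := by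
  have hm := Nat.sqrt_add_eq' m hk
  rw [h, Nat.sqrt_add_eq' m' hk'] at hm
  subst hm
  omega

lemma glen_le {α : ℝ} (hα : 0 < α) (hα1 : α ≤ 1) {m : ℕ} (hm : 1 ≤ m) : glen α m ≤ m := by
  have hm' : (1 : ℝ) ≤ m := by exact_mod_cast hm
  have hlog : 0 ≤ Real.log m := Real.log_nonneg hm'
  rw [glen, Int.ceil_le, Int.cast_natCast]
  rcases le_total (Real.log m) 1 with h | h
  · exact (Real.rpow_le_one hlog h hα.le).trans hm'
  · exact (Real.rpow_le_self_of_one_le h hα1).trans (Real.log_le_self (by positivity))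

namespace Xa

variable {V : Type*} {α : ℝ} {G : SimpleGraph V} {x : ℤ → V}

open SimpleGraph

lemma adj_iff {a b : XaV α V} :
    (Xa α G x).Adj a b ↔ a ≠ b ∧ (xaRel α G x a b ∨ xaRel α G x b a) :=
  fromRel_adj _ _ _

def inlHom (α : ℝ) (G : SimpleGraph V) (x : ℤ → V) : G →g Xa α G x where
  toFun := Sum.inl
  map_rel' h := adj_iff.mpr ⟨Sum.inl_injective.ne h.ne, .inl h⟩

lemma dist_inl_le (hconn : G.Connected) (u v : V) :
    (Xa α G x).dist (Sum.inl u) (Sum.inl v) ≤ G.dist u v :=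
  (hconn u v).dist_map_le (inlHom α G x)

/-- Turns out to be the distance from `x₀` in `X_α`. -/
noncomputable def height (G : SimpleGraph V) (x : ℤ → V) : XaV α V → ℕ :=
  Sum.elim (G.dist (x 0)) fun p ↦ p.1.1 ^ 2 + p.1.2

lemma dist_geodesic_sq (hgeo : ∀ m n : ℤ, G.dist (x m) (x n) = (m - n).natAbs) (m : ℕ) :
    G.dist (x 0) (x ((m : ℤ) ^ 2)) = m ^ 2 := by
  rw [hgeo, zero_sub, Int.natAbs_neg]
  exact Int.natAbs_pow _ _

lemma height_le_of_xaRel (hgeo : ∀ m n : ℤ, G.dist (x m) (x n) = (m - n).natAbs)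
    {a b : XaV α V} (h : xaRel α G x a b) :
    height G x b ≤ height G x a + 1 ∧ height G x a ≤ height G x b + 1 := by
  rcases a with u | ⟨⟨m, k⟩, hp⟩ <;> rcases b with v | ⟨⟨m', k'⟩, hq⟩ <;>
    simp only [xaRel] at h <;> simp only [height, Sum.elim_inl, Sum.elim_inr]
  · have := h.diff_dist_adj (u := x 0)
    omega
  · obtain ⟨rfl, rfl⟩ := h
    rw [dist_geodesic_sq hgeo]
    omega
  · obtain ⟨rfl, rfl⟩ := h
    rw [dist_geodesic_sq hgeo]
    omega
  · obtain ⟨rfl, hk⟩ := h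
    omega

lemma height_le_of_adj (hgeo : ∀ m n : ℤ, G.dist (x m) (x n) = (m - n).natAbs)
    {a b : XaV α V} (h : (Xa α G x).Adj a b) : height G x b ≤ height G x a + 1 := by
  rcases (adj_iff.mp h).2 with h | h
  exacts [(height_le_of_xaRel hgeo h).1, (height_le_of_xaRel hgeo h).2]

lemma dist_inr_le (hconn : G.Connected)
    (hgeo : ∀ m n : ℤ, G.dist (x m) (x n) = (m - n).natAbs) (m : ℕ) :
    ∀ (k : ℕ) (hk : 1 ≤ m ∧ 1 ≤ k ∧ (k : ℤ) ≤ glen α m),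
      (Xa α G x).dist (Sum.inl (x 0)) (Sum.inr ⟨(m, k), hk⟩) ≤ m ^ 2 + k
  | 0, hk => absurd hk.2.1 (by omega)
  | 1, hk => by
    have hadj : (Xa α G x).Adj (Sum.inl (x ((m : ℤ) ^ 2))) (Sum.inr ⟨(m, 1), hk⟩) :=
      adj_iff.mpr ⟨Sum.inl_ne_inr, .inl ⟨rfl, rfl⟩⟩
    have := dist_inl_le (α := α) (x := x) hconn (x 0) (x ((m : ℤ) ^ 2))
    rw [dist_geodesic_sq hgeo] at this
    exact (hadj.dist_le_dist_add_one _).trans (by omega)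
  | k + 2, hk => by
    have hk' : 1 ≤ m ∧ 1 ≤ k + 1 ∧ ((k + 1 : ℕ) : ℤ) ≤ glen α m :=
      ⟨hk.1, by omega, by have := hk.2.2; push_cast at this ⊢; omega⟩
    have hadj : (Xa α G x).Adj (Sum.inr ⟨(m, k + 1), hk'⟩) (Sum.inr ⟨(m, k + 2), hk⟩) :=
      adj_iff.mpr ⟨by simp [XaV], .inl ⟨rfl, .inl rfl⟩⟩
    exact (hadj.dist_le_dist_add_one _).trans (by have := dist_inr_le hconn hgeo m _ hk'; omega)

lemma dist_le_height (hconn : G.Connected)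
    (hgeo : ∀ m n : ℤ, G.dist (x m) (x n) = (m - n).natAbs) :
    ∀ v : XaV α V, (Xa α G x).dist (Sum.inl (x 0)) v ≤ height G x v
  | Sum.inl u => dist_inl_le hconn _ u
  | Sum.inr ⟨(m, k), hk⟩ => dist_inr_le hconn hgeo m k hk

lemma height_eq_of_mem_gsphere (hconn : G.Connected)
    (hgeo : ∀ m n : ℤ, G.dist (x m) (x n) = (m - n).natAbs) {n : ℕ} (hn : n ≠ 0)
    {v : XaV α V} (hv : v ∈ gsphere (Xa α G x) (Sum.inl (x 0)) n) : height G x v = n := by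
  have hreach := Reachable.of_dist_ne_zero (hv.trans_ne hn)
  have hle := hreach.le_add_dist (fun _ _ ↦ height_le_of_adj hgeo)
  have hge := dist_le_height hconn hgeo v
  have h0 : height G x (Sum.inl (x 0) : XaV α V) = 0 := dist_self
  rw [hv] at hle hge
  omega

lemma subsingleton_setOf_height_eq (hα : 0 < α) (hα1 : α ≤ 1) (n : ℕ) :
    {p : {p : ℕ × ℕ // 1 ≤ p.1 ∧ 1 ≤ p.2 ∧ (p.2 : ℤ) ≤ glen α p.1} |
      p.1.1 ^ 2 + p.1.2 = n}.Subsingleton := by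
  rintro ⟨⟨m, k⟩, hm, -, hk⟩ (hp : m ^ 2 + k = n) ⟨⟨m', k'⟩, hm', -, hk'⟩ (hq : m' ^ 2 + k' = n)
  have hkm : (k : ℤ) ≤ m := hk.trans (glen_le hα hα1 hm)
  have hkm' : (k' : ℤ) ≤ m' := hk'.trans (glen_le hα hα1 hm')
  obtain ⟨rfl, rfl⟩ := Nat.eq_of_sq_add_eq (by omega) (by omega) (hp.trans hq.symm)
  rfl

end Xa

theorem stmt10_general {V : Type*} (G : SimpleGraph V)
    (hlf : ∀ v : V, (G.neighborSet v).Finite) (hconn : G.Connected)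
    (x : ℤ → V) (hgeo : ∀ m n : ℤ, G.dist (x m) (x n) = (m - n).natAbs)
    (α : ℝ) (hα : 0 < α) (hα1 : α ≤ 1) :
    ∀ n : ℕ, 1 ≤ n →
      (gsphere (Xa α G x) (Sum.inl (x 0)) n).ncard ≤ (gsphere G (x 0) n).ncard + 1 := by
  intro n hn
  set T := {p : {p : ℕ × ℕ // 1 ≤ p.1 ∧ 1 ≤ p.2 ∧ (p.2 : ℤ) ≤ glen α p.1} |
    p.1.1 ^ 2 + p.1.2 = n}
  have hT : T.Subsingleton := Xa.subsingleton_setOf_height_eq hα hα1 n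
  have hsub : gsphere (Xa α G x) (Sum.inl (x 0)) n ⊆
      Sum.inl '' gsphere G (x 0) n ∪ Sum.inr '' T := by
    rintro (u | p) hv <;> have := Xa.height_eq_of_mem_gsphere hconn hgeo (by omega) hv
    exacts [.inl ⟨u, this, rfl⟩, .inr ⟨p, this, rfl⟩]
  have hfin := hconn.finite_gsphere hlf (x 0) n
  calc (gsphere (Xa α G x) (Sum.inl (x 0)) n).ncard
      ≤ (Sum.inl '' gsphere G (x 0) n ∪ Sum.inr '' T).ncard :=
        Set.ncard_le_ncard hsub ((hfin.image _).union (hT.image _).finite)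
    _ ≤ (gsphere G (x 0) n).ncard + (Sum.inr '' T).ncard := by
        grw [Set.ncard_union_le, Set.ncard_image_of_injective _ Sum.inl_injective]
    _ ≤ (gsphere G (x 0) n).ncard + 1 := by
        grw [Set.ncard_le_one (hT.image _).finite |>.mpr (hT.image _)]

/-- for every `n ≥ 1`, `|S_{X_α}(x₀,n)| ≤ |S_X(x₀,n)| + 1`,
where `x₀ = x 0`. -/
theorem stmt10 {V : Type*} (G : SimpleGraph V) [Infinite V]
    (hlf : ∀ v : V, (G.neighborSet v).Finite) (hconn : G.Connected)
    (x : ℤ → V) (hgeo : ∀ m n : ℤ, G.dist (x m) (x n) = (m - n).natAbs)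
    (α : ℝ) (hα : 0 < α) (hα1 : α ≤ 1) :
    ∀ n : ℕ, 1 ≤ n →
      (gsphere (Xa α G x) (Sum.inl (x 0)) n).ncard ≤ (gsphere G (x 0) n).ncard + 1 :=
  stmt10_general G hlf hconn x hgeo α hα hα1
end

section
/- Let X be an infinite, locally finite, connected, vertex-transitive graph containing a bi-infinite geodesic (x_n)_{n∈ℤ} with d(x_m,x_n) = |m − n|, and let 0 < α < β ≤ 1. Then no quasi-isometric embedding f : X_α → X_β is coarsely surjective. Consequently, for 0 < α, β ≤ 1 with α ≠ β, the graphs X_α and X_β are not quasi-isometric. -/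
namespace St15

open SimpleGraph Sum

abbrev WT (γ : ℝ) := {p : ℕ × ℕ // 1 ≤ p.1 ∧ 1 ≤ p.2 ∧ (p.2 : ℤ) ≤ glen γ p.1}

variable {V : Type*} {γ : ℝ} {G : SimpleGraph V} {x : ℤ → V}

lemma adj_inl_inl {u v : V} (h : G.Adj u v) : (Xa γ G x).Adj (inl u) (inl v) := by
  rw [Xa]; refine (SimpleGraph.fromRel_adj _ _ _).mpr ?_
  refine ⟨?_, Or.inl h⟩
  intro he
  replace he := Sum.inl.inj he
  exact h.ne he

lemma adj_base {p : WT γ} (h1 : p.1.2 = 1) :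
    (Xa γ G x).Adj (inl (x ((p.1.1 : ℤ) ^ 2))) (inr p) := by
  rw [Xa]; refine (SimpleGraph.fromRel_adj _ _ _).mpr ?_
  exact ⟨by exact Sum.inl_ne_inr, Or.inl ⟨h1, rfl⟩⟩

lemma adj_step {p q : WT γ} (hn : p.1.1 = q.1.1) (hk : p.1.2 + 1 = q.1.2) :
    (Xa γ G x).Adj (inr p) (inr q) := by
  rw [Xa]; refine (SimpleGraph.fromRel_adj _ _ _).mpr ?_
  refine ⟨?_, Or.inl ⟨hn, Or.inl hk⟩⟩
  intro h
  replace h := Sum.inr.inj h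
  rw [h] at hk
  omega

/-- the inclusion homomorphism -/
def ι (γ : ℝ) (G : SimpleGraph V) (x : ℤ → V) : G →g Xa γ G x :=
  ⟨inl, fun h => adj_inl_inl h⟩

lemma reach_base (p : WT γ) :
    (Xa γ G x).Reachable (inr p) (inl (x ((p.1.1 : ℤ) ^ 2))) := by
  obtain ⟨⟨n, k⟩, hn, hk, hg⟩ := p
  induction k with
  | zero => omega
  | succ k ih =>
    rcases Nat.eq_or_lt_of_le hk with h1 | h2
    · exact ((adj_base (p := ⟨(n, k+1), hn, hk, hg⟩) h1.symm).symm).reachable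
    · have hk' : 1 ≤ k := by omega
      have hg' : (k : ℤ) ≤ glen γ n := by push_cast at hg ⊢; omega
      have step := adj_step (G := G) (x := x) (p := ⟨(n, k), hn, hk', hg'⟩)
        (q := ⟨(n, k+1), hn, hk, hg⟩) rfl rfl
      exact (step.symm.reachable).trans (ih hn hk' hg')

lemma xa_conn (hGc : G.Connected) : (Xa γ G x).Connected := by
  have hne : Nonempty V := hGc.nonempty
  have hpre : (Xa γ G x).Preconnected := by
    intro a b
    have key : ∀ c : XaV γ V, ∃ v : V, (Xa γ G x).Reachable c (inl v) := by
      rintro (v | p)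
      · exact ⟨v, Reachable.refl _⟩
      · exact ⟨_, reach_base p⟩
    obtain ⟨va, ha⟩ := key a
    obtain ⟨vb, hb⟩ := key b
    exact (ha.trans ((hGc va vb).map (ι γ G x))).trans hb.symm
  haveI : Nonempty (XaV γ V) := ⟨inl (Classical.arbitrary V)⟩
  exact ⟨hpre⟩

lemma dist_inl_le (hGc : G.Connected) (u v : V) :
    (Xa γ G x).dist (inl u) (inl v) ≤ G.dist u v := by
  obtain ⟨p, hp⟩ := hGc.exists_walk_length_eq_dist u v
  calc (Xa γ G x).dist (inl u) (inl v) ≤ (p.map (ι γ G x)).length := SimpleGraph.dist_le _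
  _ = G.dist u v := by rw [SimpleGraph.Walk.length_map, hp]

lemma dist_whisker_le (hGc : G.Connected) {p q : WT γ} (hpq : p.1.1 = q.1.1) :
    (Xa γ G x).dist (inr p) (inr q) ≤ ((p.1.2 : ℤ) - q.1.2).natAbs := by
  have conn := xa_conn (γ := γ) (x := x) hGc
  -- auxiliary: for all d, if q.1.2 = p.1.2 + d then dist ≤ d
  have aux : ∀ d : ℕ, ∀ p q : WT γ, p.1.1 = q.1.1 → q.1.2 = p.1.2 + d →
      (Xa γ G x).dist (inr p) (inr q) ≤ d := by
    intro d
    induction d with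
    | zero =>
      intro p q h1 h2
      have : p = q := by
        ext : 1
        · exact Prod.ext h1 (by omega)
      rw [this]; exact SimpleGraph.dist_self.le
    | succ d ih =>
      intro p q h1 h2
      have hval : 1 ≤ p.1.2 + d ∧ ((p.1.2 + d : ℕ) : ℤ) ≤ glen γ q.1.1 := by
        have := q.2.2.2
        constructor
        · omega
        · push_cast at this ⊢; omega
      have hq' : ∃ q' : WT γ, q'.1.1 = q.1.1 ∧ q'.1.2 = p.1.2 + d :=
        ⟨⟨(q.1.1, p.1.2 + d), q.2.1, hval.1, hval.2⟩, rfl, rfl⟩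
      obtain ⟨q', hq1, hq2⟩ := hq'
      have h3 : (Xa γ G x).dist (inr p) (inr q') ≤ d := ih p q' (by omega) (by omega)
      have h4 : (Xa γ G x).Adj (inr q') (inr q) := adj_step hq1 (by omega)
      calc (Xa γ G x).dist (inr p) (inr q)
          ≤ (Xa γ G x).dist (inr p) (inr q') + (Xa γ G x).dist (inr q') (inr q) :=
            conn.dist_triangle
        _ ≤ d + 1 := by
            have : (Xa γ G x).dist (inr q') (inr q) = 1 :=
              SimpleGraph.dist_eq_one_iff_adj.mpr h4
            omega
  rcases le_total p.1.2 q.1.2 with h | h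
  · have := aux (q.1.2 - p.1.2) p q hpq (by omega)
    calc (Xa γ G x).dist (inr p) (inr q) ≤ q.1.2 - p.1.2 := this
    _ ≤ ((p.1.2 : ℤ) - q.1.2).natAbs := by omega
  · have := aux (p.1.2 - q.1.2) q p hpq.symm (by omega)
    refine SimpleGraph.dist_comm.trans_le ?_
    calc (Xa γ G x).dist (inr q) (inr p) ≤ p.1.2 - q.1.2 := this
    _ ≤ ((p.1.2 : ℤ) - q.1.2).natAbs := by omega

lemma dist_base_le (hGc : G.Connected) (p : WT γ) :
    (Xa γ G x).dist (inr p) (inl (x ((p.1.1 : ℤ) ^ 2))) ≤ p.1.2 := by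
  have conn := xa_conn (γ := γ) (x := x) hGc
  have h1g : (1 : ℤ) ≤ glen γ p.1.1 := le_trans (by exact_mod_cast p.2.2.1) p.2.2.2
  have hq1 : ∃ q1 : WT γ, q1.1.1 = p.1.1 ∧ q1.1.2 = 1 :=
    ⟨⟨(p.1.1, 1), p.2.1, le_refl 1, h1g⟩, rfl, rfl⟩
  obtain ⟨q1, hq11, hq12⟩ := hq1
  have h1 : (Xa γ G x).dist (inr p) (inr q1) ≤ p.1.2 - 1 := by
    have := dist_whisker_le (x := x) hGc (p := p) (q := q1) hq11.symm
    have := p.2.2.1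
    omega
  have h2 : (Xa γ G x).dist (inr q1) (inl (x ((p.1.1 : ℤ) ^ 2))) = 1 := by
    refine SimpleGraph.dist_comm.trans ?_
    have : (Xa γ G x).Adj (inl (x ((q1.1.1 : ℤ) ^ 2))) (inr q1) := adj_base hq12
    rw [hq11] at this
    exact SimpleGraph.dist_eq_one_iff_adj.mpr this
  calc (Xa γ G x).dist (inr p) (inl (x ((p.1.1 : ℤ) ^ 2)))
      ≤ (Xa γ G x).dist (inr p) (inr q1) + (Xa γ G x).dist (inr q1) (inl (x ((p.1.1:ℤ)^2))) :=
        conn.dist_triangle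
    _ ≤ p.1.2 := by
        have := p.2.2.1
        omega

/-- depth within whisker `n` (0 elsewhere) -/
def depn (γ : ℝ) {V : Type*} (n : ℕ) : XaV γ V → ℤ := fun z =>
  match z with
  | inl _ => 0
  | inr p => if p.1.1 = n then (p.1.2 : ℤ) else 0

/-- global depth -/
def dep (γ : ℝ) {V : Type*} : XaV γ V → ℤ := fun z =>
  match z with
  | inl _ => 0
  | inr p => (p.1.2 : ℤ)

/-- projection to the base graph -/
def prj (γ : ℝ) {V : Type*} (x : ℤ → V) : XaV γ V → V := fun z =>
  match z with
  | inl v => v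
  | inr p => x ((p.1.1 : ℤ) ^ 2)

lemma abs_le_walk {F : XaV γ V → ℤ}
    (hF : ∀ a b, (Xa γ G x).Adj a b → |F a - F b| ≤ 1) :
    ∀ {u v : XaV γ V} (p : (Xa γ G x).Walk u v), |F u - F v| ≤ p.length := by
  intro u v p
  induction p with
  | nil => simp
  | @cons a b c h q ih =>
    have h1 := hF a b h
    calc |F a - F c| ≤ |F a - F b| + |F b - F c| := abs_sub_le _ _ _
    _ ≤ 1 + q.length := by
        have := ih
        omega
    _ = (SimpleGraph.Walk.cons h q).length := by
        rw [SimpleGraph.Walk.length_cons]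
        push_cast
        ring

lemma abs_le_dist (hGc : G.Connected) {F : XaV γ V → ℤ}
    (hF : ∀ a b, (Xa γ G x).Adj a b → |F a - F b| ≤ 1) (u v : XaV γ V) :
    |F u - F v| ≤ ((Xa γ G x).dist u v : ℤ) := by
  obtain ⟨p, hp⟩ := (xa_conn (γ := γ) (x := x) hGc).exists_walk_length_eq_dist u v
  have := abs_le_walk (x := x) hF p
  rw [hp] at this
  exact this

lemma depn_lip (n : ℕ) :
    ∀ a b : XaV γ V, (Xa γ G x).Adj a b → |depn γ n a - depn γ n b| ≤ 1 := by
  have key : ∀ a b : XaV γ V, xaRel γ G x a b → |depn γ n a - depn γ n b| ≤ 1 := by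
    rintro (u | p) (v | q) h
    · simp [depn]
    · obtain ⟨h1, _⟩ := h
      simp only [depn]
      split <;> simp [h1]
    · obtain ⟨h1, _⟩ := h
      simp only [depn]
      split <;> simp [h1]
    · obtain ⟨h1, h2⟩ := h
      simp only [depn, h1]
      split
      · rcases h2 with h2 | h2 <;> (rw [← h2]; push_cast; rw [abs_le]; omega)
      · simp
  intro a b h
  rw [Xa, SimpleGraph.fromRel_adj] at h
  rcases h.2 with h2 | h2
  · exact key a b h2
  · have := key b a h2
    rw [abs_sub_comm]
    exact this

lemma dep_lip :
    ∀ a b : XaV γ V, (Xa γ G x).Adj a b → |dep γ a - dep γ b| ≤ 1 := by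
  have key : ∀ a b : XaV γ V, xaRel γ G x a b → |dep γ a - dep γ b| ≤ 1 := by
    rintro (u | p) (v | q) h
    · simp [dep]
    · obtain ⟨h1, _⟩ := h
      simp [dep, h1]
    · obtain ⟨h1, _⟩ := h
      simp [dep, h1]
    · obtain ⟨h1, h2⟩ := h
      simp only [dep]
      rcases h2 with h2 | h2 <;> (rw [← h2]; push_cast; rw [abs_le]; omega)
  intro a b h
  rw [Xa, SimpleGraph.fromRel_adj] at h
  rcases h.2 with h2 | h2
  · exact key a b h2
  · have := key b a h2
    rw [abs_sub_comm]
    exact this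

lemma prj_lip (hGc : G.Connected) (w : V) :
    ∀ a b : XaV γ V, (Xa γ G x).Adj a b →
      |(G.dist w (prj γ x a) : ℤ) - (G.dist w (prj γ x b) : ℤ)| ≤ 1 := by
  have key : ∀ a b : XaV γ V, xaRel γ G x a b →
      |(G.dist w (prj γ x a) : ℤ) - (G.dist w (prj γ x b) : ℤ)| ≤ 1 := by
    have tri : ∀ u v : V, G.Adj u v → |(G.dist w u : ℤ) - (G.dist w v : ℤ)| ≤ 1 := by
      intro u v h
      have h1 : G.dist w u ≤ G.dist w v + 1 := by
        have := hGc.dist_triangle (u := w) (v := v) (w := u)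
        have h2 : G.dist v u = 1 := SimpleGraph.dist_eq_one_iff_adj.mpr h.symm
        omega
      have h2 : G.dist w v ≤ G.dist w u + 1 := by
        have := hGc.dist_triangle (u := w) (v := u) (w := v)
        have h2 : G.dist u v = 1 := SimpleGraph.dist_eq_one_iff_adj.mpr h
        omega
      rw [abs_le]
      omega
    rintro (u | p) (v | q) h
    · exact tri u v h
    · obtain ⟨_, h1⟩ := h
      simp [prj, ← h1]
    · obtain ⟨_, h1⟩ := h
      simp [prj, ← h1]
    · obtain ⟨h1, _⟩ := h
      simp [prj, h1]
  intro a b h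
  rw [Xa, SimpleGraph.fromRel_adj] at h
  rcases h.2 with h2 | h2
  · exact key a b h2
  · have := key b a h2
    rw [abs_sub_comm]
    exact this

lemma dist_inl_eq (hGc : G.Connected) (u v : V) :
    (Xa γ G x).dist (inl u) (inl v) = G.dist u v := by
  refine le_antisymm (dist_inl_le hGc u v) ?_
  have := abs_le_dist (γ := γ) (x := x) hGc (prj_lip hGc u) (inl u) (inl v)
  simp only [prj, SimpleGraph.dist_self] at this
  rw [abs_le] at this
  omega

/-- lower bound: distance from a point to an `inl` point is at least the `G`-distance
of their projections -/
lemma dist_prj_le (hGc : G.Connected) (w : V) (a b : XaV γ V) :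
    (G.dist w (prj γ x a) : ℤ) - (G.dist w (prj γ x b) : ℤ) ≤ (Xa γ G x).dist a b := by
  have := abs_le_dist (γ := γ) (x := x) hGc (prj_lip hGc w) a b
  rw [abs_le] at this
  omega

lemma gdist_nonneg' {W : Type*} (H : SimpleGraph W) (a b : W) : 0 ≤ gdist H a b := by
  simp [gdist]

lemma gdist_comm' {W : Type*} (H : SimpleGraph W) (a b : W) : gdist H a b = gdist H b a := by
  simp [gdist, SimpleGraph.dist_comm]

lemma gdist_triangle' {W : Type*} {H : SimpleGraph W} (hc : H.Connected) (a b c : W) :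
    gdist H a c ≤ gdist H a b + gdist H b c := by
  simp only [gdist]
  exact_mod_cast hc.dist_triangle

lemma gdist_inl (hGc : G.Connected) (u v : V) :
    gdist (Xa γ G x) (inl u) (inl v) = (G.dist u v : ℝ) := by
  simp [gdist, dist_inl_eq hGc]

lemma gdist_whisker (hGc : G.Connected) {p q : WT γ} (hpq : p.1.1 = q.1.1) :
    gdist (Xa γ G x) (inr p) (inr q) ≤ |(p.1.2 : ℝ) - q.1.2| := by
  have h := dist_whisker_le (x := x) hGc hpq
  have h2 : (((p.1.2 : ℤ) - q.1.2).natAbs : ℝ) = |(p.1.2 : ℝ) - q.1.2| := by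
    rw [Nat.cast_natAbs]
    push_cast
    ring_nf
  calc gdist (Xa γ G x) (inr p) (inr q) ≤ (((p.1.2 : ℤ) - q.1.2).natAbs : ℝ) := by
        unfold gdist
        exact_mod_cast h
    _ = _ := h2

lemma gdist_base (hGc : G.Connected) (p : WT γ) :
    gdist (Xa γ G x) (inr p) (inl (x ((p.1.1 : ℤ) ^ 2))) ≤ (p.1.2 : ℝ) := by
  unfold gdist
  exact_mod_cast dist_base_le (x := x) hGc p

lemma abs_le_gdist (hGc : G.Connected) {F : XaV γ V → ℤ}
    (hF : ∀ a b, (Xa γ G x).Adj a b → |F a - F b| ≤ 1) (u v : XaV γ V) :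
    |(F u : ℝ) - (F v : ℝ)| ≤ gdist (Xa γ G x) u v := by
  have := abs_le_dist (γ := γ) (x := x) hGc hF u v
  have h2 : ((|F u - F v| : ℤ) : ℝ) = |(F u : ℝ) - (F v : ℝ)| := by push_cast; ring_nf
  rw [gdist, ← h2]
  exact_mod_cast this

lemma glen_nonneg (γ : ℝ) (n : ℕ) : 0 ≤ glen γ n :=
  Int.ceil_nonneg (Real.rpow_nonneg (Real.log_natCast_nonneg n) γ)

lemma le_glen (γ : ℝ) (n : ℕ) : Real.log n ^ γ ≤ (glen γ n : ℝ) := Int.le_ceil _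

lemma glen_le (γ : ℝ) (n : ℕ) : (glen γ n : ℝ) ≤ Real.log n ^ γ + 1 :=
  (Int.ceil_lt_add_one _).le

lemma glen_pos (γ : ℝ) {n : ℕ} (hn : 2 ≤ n) : 1 ≤ glen γ n := by
  have h1 : (0 : ℝ) < Real.log n := Real.log_pos (by exact_mod_cast hn)
  exact Int.ceil_pos.mpr (Real.rpow_pos_of_pos h1 γ)

lemma depn_decode {n : ℕ} {z : XaV γ V} (h : 0 < depn γ n z) :
    ∃ q : WT γ, z = inr q ∧ q.1.1 = n ∧ depn γ n z = (q.1.2 : ℤ) := by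
  rcases z with v | q
  · simp [depn] at h
  · refine ⟨q, rfl, ?_, ?_⟩ <;> (simp only [depn] at h ⊢) <;> (split at h)
    · assumption
    · omega
    · split
      · rfl
      · omega
    · omega

lemma iso_dist (hGc : G.Connected) (φ : G ≃g G) (u v : V) :
    G.dist (φ u) (φ v) = G.dist u v := by
  have key : ∀ (ψ : G ≃g G) (a b : V), G.dist (ψ a) (ψ b) ≤ G.dist a b := by
    intro ψ a b
    obtain ⟨p, hp⟩ := hGc.exists_walk_length_eq_dist a b
    calc G.dist (ψ a) (ψ b) ≤ (p.map ψ.toHom).length := SimpleGraph.dist_le _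
    _ = G.dist a b := by rw [SimpleGraph.Walk.length_map, hp]
  refine le_antisymm (key φ u v) ?_
  have := key φ.symm (φ u) (φ v)
  simpa using this

set_option maxHeartbeats 2000000 in
lemma shallow {α β L A : ℝ} {f : XaV α V → XaV β V} (hGc : G.Connected)
    (hL : 1 ≤ L) (hA : 0 ≤ A)
    (hQ : IsQIE (gdist (Xa α G x)) (gdist (Xa β G x)) L A f)
    (ℓ : ℤ → V) (hℓ : ∀ s t : ℤ, G.dist (ℓ s) (ℓ t) = (s - t).natAbs) :
    ((dep β (f (inl (ℓ 0))) : ℤ) : ℝ) ≤ L^2*(L+2*A) + 2*A + 2*L + 4 := by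
  classical
  have hL0 : (0:ℝ) < L := lt_of_lt_of_le one_pos hL
  have dlin : ∀ s t : ℤ, gdist (Xa α G x) (inl (ℓ s)) (inl (ℓ t)) = ((s - t).natAbs : ℝ) := by
    intro s t
    rw [gdist_inl hGc, hℓ]
  by_contra hbig
  push_neg at hbig
  rcases hz : f (inl (ℓ 0)) with v | p
  · rw [hz] at hbig
    simp only [dep] at hbig
    norm_num at hbig
    nlinarith
  rw [hz] at hbig
  simp only [dep] at hbig
  push_cast at hbig
  set n := p.1.1 with hn
  set h := p.1.2 with hh
  -- basic facts about h
  have hh1 : 1 ≤ h := p.2.2.1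
  have hhg : (h : ℤ) ≤ glen β n := p.2.2.2
  set lam : ℕ := h / 2 with hlamdef
  have hlam1 : (lam : ℝ) ≤ (h : ℝ) / 2 := by
    have : 2 * lam ≤ h := by omega
    have := (Nat.cast_le (α := ℝ)).mpr this
    push_cast at this
    linarith
  have hlam2 : (h : ℝ) - 1 ≤ 2 * lam := by
    have : h ≤ 2 * lam + 1 := by omega
    have := (Nat.cast_le (α := ℝ)).mpr this
    push_cast at this
    linarith
  have hnn : (0:ℝ) ≤ L^2*(L+2*A) := by
    have h1 : (0:ℝ) ≤ L + 2*A := by linarith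
    have h2 : (0:ℝ) ≤ L^2 := sq_nonneg L
    exact mul_nonneg h2 h1
  have hlamLA : L + A + 1 ≤ (lam : ℝ) := by nlinarith
  have hlamh : (lam : ℝ) < (h : ℝ) := by
    have : lam < h := by omega
    exact_mod_cast this
  have hlamhZ : (lam : ℤ) < (h : ℤ) := by exact_mod_cast (by omega : lam < h)
  -- the ray argument
  have ray : ∀ e : ℤ, e = 1 ∨ e = -1 →
      ∃ (T : ℕ) (q : WT β), f (inl (ℓ (e * T))) = inr q ∧ q.1.1 = n ∧
        (lam : ℝ) - (L + A) < (q.1.2 : ℝ) ∧ (q.1.2 : ℝ) ≤ lam ∧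
        ((h : ℝ) - lam - A) / L ≤ T := by
    intro e he
    have habs : ∀ t : ℕ, (e * (t : ℤ)).natAbs = t := by
      intro t
      rcases he with h | h <;> simp [h]
    set P : ℕ → Prop := fun t => depn β n (f (inl (ℓ (e * t)))) ≤ (lam : ℤ) with hP
    have hex : ∃ t, P t := by
      set t₁ : ℕ := ⌈L * ((glen β n : ℝ) + A)⌉₊ + 1 with ht₁
      refine ⟨t₁, ?_⟩
      by_contra hnp
      have hnp' : (lam : ℤ) < depn β n (f (inl (ℓ (e * t₁)))) := by
        simp only [hP] at hnp
        omega
      have hpos : 0 < depn β n (f (inl (ℓ (e * t₁)))) := by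
        have : (0:ℤ) ≤ lam := by positivity
        omega
      obtain ⟨q, hq, hqn, hqd⟩ := depn_decode hpos
      -- both in whisker n: distance at most glen
      have hd1 : gdist (Xa β G x) (f (inl (ℓ 0))) (f (inl (ℓ (e * t₁)))) ≤ (glen β n : ℝ) := by
        rw [hz, hq]
        have hw := gdist_whisker (γ := β) (x := x) hGc (p := p) (q := q) (by rw [hqn])
        have hq2 : (q.1.2 : ℤ) ≤ glen β n := by rw [← hqn]; exact q.2.2.2
        have hq1 : 1 ≤ q.1.2 := q.2.2.1
        refine le_trans hw ?_
        rw [abs_le]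
        constructor
        · have : (1:ℝ) ≤ (h:ℝ) := by exact_mod_cast hh1
          have : (q.1.2 : ℝ) ≤ (glen β n : ℝ) := by exact_mod_cast hq2
          nlinarith [this]
        · have h1 : (h:ℝ) ≤ (glen β n : ℝ) := by exact_mod_cast hhg
          have h2 : (1:ℝ) ≤ (q.1.2:ℝ) := by exact_mod_cast hq1
          nlinarith
      have hdl := (hQ (inl (ℓ 0)) (inl (ℓ (e * t₁)))).1
      rw [dlin] at hdl
      have hna' : (0 - e * (t₁:ℤ)).natAbs = t₁ := by
        rw [zero_sub, Int.natAbs_neg]; exact habs t₁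
      rw [hna'] at hdl
      have ht1b : (t₁ : ℝ) ≤ L * ((glen β n : ℝ) + A) := by
        have := le_trans hdl hd1
        have h2 : (1/L) * (t₁:ℝ) ≤ (glen β n : ℝ) + A := by linarith
        calc (t₁ : ℝ) = L * ((1/L) * t₁) := by field_simp
        _ ≤ L * ((glen β n : ℝ) + A) := by
            apply mul_le_mul_of_nonneg_left h2 hL0.le
      have : (t₁ : ℝ) ≥ ⌈L * ((glen β n : ℝ) + A)⌉₊ + 1 := by
        rw [ht₁]; push_cast; linarith
      have := Nat.le_ceil (L * ((glen β n : ℝ) + A))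
      linarith
    set T := Nat.find hex with hT
    have hPT : P T := Nat.find_spec hex
    have hT0 : ¬ P 0 := by
      simp only [hP]
      intro hcon
      simp only [Nat.cast_zero, mul_zero] at hcon
      rw [hz] at hcon
      simp only [depn] at hcon
      norm_num at hcon
      omega
    have hTpos : 0 < T := by
      rcases Nat.eq_zero_or_pos T with h | h
      · rw [hT] at h
        exact absurd (h ▸ hPT) hT0
      · exact h
    have hTm : ¬ P (T - 1) := Nat.find_min hex (by omega)
    have hdm : (lam : ℤ) < depn β n (f (inl (ℓ (e * (T-1 : ℕ))))) := by
      simp only [hP] at hTm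
      omega
    have hposm : 0 < depn β n (f (inl (ℓ (e * (T-1 : ℕ))))) := by
      have : (0:ℤ) ≤ lam := by positivity
      omega
    obtain ⟨q₁, hq₁, hq₁n, hq₁d⟩ := depn_decode hposm
    -- consecutive distance
    have hstep : gdist (Xa α G x) (inl (ℓ (e * (T-1:ℕ)))) (inl (ℓ (e * T))) = 1 := by
      rw [dlin]
      have : (e * ((T-1:ℕ):ℤ) - e * (T:ℤ)).natAbs = 1 := by
        have hc : ((T-1:ℕ):ℤ) = (T:ℤ) - 1 := by omega
        rw [hc]
        rcases he with h | h <;> subst h <;> omega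
      rw [this]
      norm_num
    have hfstep : gdist (Xa β G x) (f (inl (ℓ (e * (T-1:ℕ))))) (f (inl (ℓ (e * T)))) ≤ L + A := by
      have := (hQ (inl (ℓ (e * (T-1:ℕ)))) (inl (ℓ (e * T)))).2
      rw [hstep] at this
      linarith
    have hlip := abs_le_gdist (γ := β) (x := x) hGc (depn_lip n)
      (f (inl (ℓ (e * (T-1:ℕ))))) (f (inl (ℓ (e * T))))
    have hd2pos : (lam : ℝ) - (L + A) < ((depn β n (f (inl (ℓ (e * T))))) : ℝ) := by
      have h1 : ((depn β n (f (inl (ℓ (e * (T-1:ℕ)))))) : ℝ) > (lam : ℝ) := by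
        exact_mod_cast hdm
      have := le_trans hlip hfstep
      rw [abs_le] at this
      linarith [this.1, this.2]
    have hd2posZ : 0 < depn β n (f (inl (ℓ (e * T)))) := by
      have : (0:ℝ) < ((depn β n (f (inl (ℓ (e * T))))) : ℝ) := by linarith
      exact_mod_cast this
    obtain ⟨q₂, hq₂, hq₂n, hq₂d⟩ := depn_decode hd2posZ
    refine ⟨T, q₂, hq₂, hq₂n, ?_, ?_, ?_⟩
    · rw [hq₂d] at hd2pos
      exact_mod_cast hd2pos
    · have : depn β n (f (inl (ℓ (e * T)))) ≤ (lam : ℤ) := hPT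
      rw [hq₂d] at this
      exact_mod_cast this
    · -- T is large
      have hdT : gdist (Xa α G x) (inl (ℓ 0)) (inl (ℓ (e * T))) = (T : ℝ) := by
        rw [dlin]
        rw [show (0 - e * (T:ℤ)).natAbs = T from by rw [zero_sub, Int.natAbs_neg]; exact habs T]
      have hup := (hQ (inl (ℓ 0)) (inl (ℓ (e * T)))).2
      rw [hdT] at hup
      have hlip2 := abs_le_gdist (γ := β) (x := x) hGc (depn_lip n)
        (f (inl (ℓ 0))) (f (inl (ℓ (e * T))))
      have hdep0 : depn β n (f (inl (ℓ 0))) = (h : ℤ) := by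
        rw [hz]
        simp only [depn]
        norm_num
        exact if_pos rfl
      have hq₂lam : (q₂.1.2 : ℝ) ≤ (lam : ℝ) := by
        have : depn β n (f (inl (ℓ (e * T)))) ≤ (lam : ℤ) := hPT
        rw [hq₂d] at this
        exact_mod_cast this
      rw [hdep0, hq₂d] at hlip2
      rw [abs_le] at hlip2
      have h1 : (h : ℝ) - (q₂.1.2 : ℝ) ≤ L * T + A := by
        have := hlip2.2
        push_cast at this
        linarith
      rw [div_le_iff₀ hL0]
      have : (h:ℝ) - lam - A ≤ L * T := by linarith
      linarith [this, mul_comm L (T:ℝ)]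
  -- combine the two rays
  obtain ⟨T₁, q₁, hf1, hn1, hlow1, hup1, hTb1⟩ := ray 1 (Or.inl rfl)
  obtain ⟨T₂, q₂, hf2, hn2, hlow2, hup2, hTb2⟩ := ray (-1) (Or.inr rfl)
  have hdsum : gdist (Xa α G x) (inl (ℓ (1 * T₁))) (inl (ℓ ((-1) * T₂))) = (T₁ : ℝ) + T₂ := by
    rw [dlin]
    have : ((1 * (T₁:ℤ) - (-1) * (T₂:ℤ))).natAbs = T₁ + T₂ := by omega
    rw [this]
    push_cast
    ring
  have hdq : gdist (Xa β G x) (inr q₁) (inr q₂) ≤ L + A := by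
    have hw := gdist_whisker (γ := β) (x := x) hGc (p := q₁) (q := q₂) (by rw [hn1, hn2])
    refine le_trans hw ?_
    rw [abs_le]
    constructor <;> linarith
  have hql := (hQ (inl (ℓ (1 * T₁))) (inl (ℓ ((-1) * T₂)))).1
  rw [hdsum, hf1, hf2] at hql
  have hsum : (T₁ : ℝ) + T₂ ≤ L * (L + 2*A) := by
    have h2 : (1/L) * ((T₁:ℝ) + T₂) ≤ L + 2*A := by linarith
    calc (T₁ : ℝ) + T₂ = L * ((1/L) * ((T₁:ℝ) + T₂)) := by field_simp
    _ ≤ L * (L + 2*A) := mul_le_mul_of_nonneg_left h2 hL0.le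
  -- each T is at least (h/2 - A)/L
  have hTlow1 : ((h:ℝ)/2 - A)/L ≤ (T₁ : ℝ) := by
    refine le_trans ?_ hTb1
    gcongr
    linarith
  have hTlow2 : ((h:ℝ)/2 - A)/L ≤ (T₂ : ℝ) := by
    refine le_trans ?_ hTb2
    gcongr
    linarith
  have e1 : (h:ℝ)/2 - A ≤ (T₁:ℝ) * L := (div_le_iff₀ hL0).mp hTlow1
  have e2 : (h:ℝ)/2 - A ≤ (T₂:ℝ) * L := (div_le_iff₀ hL0).mp hTlow2
  have e3 : ((T₁:ℝ) + T₂) * L ≤ (L * (L + 2*A)) * L := mul_le_mul_of_nonneg_right hsum hL0.le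
  nlinarith [e1, e2, e3, hbig]

set_option maxHeartbeats 4000000 in
lemma part1main (hconn : G.Connected)
    (htrans : ∀ u v : V, ∃ φ : G ≃g G, φ u = v)
    (hgeo : ∀ m n : ℤ, G.dist (x m) (x n) = (m - n).natAbs) :
    ∀ α β : ℝ, 0 < α → α < β → β ≤ 1 →
      ∀ (L A : ℝ) (f : XaV α V → XaV β V), 1 ≤ L → 0 ≤ A →
        IsQIE (gdist (Xa α G x)) (gdist (Xa β G x)) L A f →
        ¬ IsCoarselySurj (gdist (Xa β G x)) f := by
  intro α β hα hab hb1 L A f hL hA hQ hCS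
  obtain ⟨C, hC0, hCS⟩ := hCS
  have hL0 : (0:ℝ) < L := lt_of_lt_of_le one_pos hL
  set h₀ : ℝ := L^2*(L+2*A) + 2*A + 2*L + 4 with hh₀
  have hh₀0 : 0 ≤ h₀ := by
    have h1 : (0:ℝ) ≤ L + 2*A := by linarith
    have h2 : (0:ℝ) ≤ L^2 := sq_nonneg L
    have := mul_nonneg h2 h1
    rw [hh₀]
    linarith
  set c₀ : ℝ := gdist (Xa β G x) (inl (x 0)) (f (inl (x 0))) with hc₀def
  have hc₀0 : 0 ≤ c₀ := gdist_nonneg' _ _ _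
  set K : ℝ := L*(C+A+c₀+2)+1 with hKdef
  have hK1 : 1 ≤ K := by
    have : (0:ℝ) ≤ L*(C+A+c₀+2) := by
      apply mul_nonneg hL0.le
      linarith
    rw [hKdef]; linarith
  set M : ℝ := C + h₀ + A + L + 1 with hMdef
  set tstar : ℝ := max 1 (max (Real.log K) ((2*L + M) ^ (1/(β-α)))) with htsdef
  have hts1 : 1 ≤ tstar := le_max_left _ _
  set n : ℕ := ⌈Real.exp tstar⌉₊ with hndef
  have hen : Real.exp tstar ≤ (n : ℝ) := Nat.le_ceil _
  have hn3 : 3 ≤ n := by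
    have h1 : (2.7:ℝ) < Real.exp 1 := by
      have := Real.exp_one_gt_d9
      linarith
    have h2 : Real.exp 1 ≤ Real.exp tstar := Real.exp_le_exp.mpr hts1
    have h3 : (2:ℝ) < (n:ℝ) := by linarith
    have h4 : 2 < n := by exact_mod_cast h3
    omega
  have hn2 : 2 ≤ n := by omega
  have hn1R : (1:ℝ) ≤ (n:ℝ) := by
    have : (1:ℕ) ≤ n := by omega
    exact_mod_cast this
  set t : ℝ := Real.log n with htdef
  have ht1 : 1 ≤ t := by
    have h1 : Real.log (Real.exp tstar) ≤ t := by
      apply Real.log_le_log (Real.exp_pos _) hen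
    rw [Real.log_exp] at h1
    linarith
  have ht0 : 0 < t := by linarith
  have htK : Real.log K ≤ t := by
    have h1 : Real.log K ≤ tstar := le_trans (le_max_left _ _) (le_max_right _ _)
    have h2 : Real.log (Real.exp tstar) ≤ t := by
      apply Real.log_le_log (Real.exp_pos _) hen
    rw [Real.log_exp] at h2
    linarith
  have hMpos : 0 < 2*L + M := by rw [hMdef]; linarith
  have htM : 2*L + M ≤ t ^ (β - α) := by
    have hba : (0:ℝ) < β - α := by linarith
    have h1 : (2*L + M) ^ (1/(β-α)) ≤ tstar := le_trans (le_max_right _ _) (le_max_right _ _)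
    have h2 : tstar ≤ t := by
      have h2' : Real.log (Real.exp tstar) ≤ t := by
        apply Real.log_le_log (Real.exp_pos _) hen
      rw [Real.log_exp] at h2'
      exact h2'
    have h3 : ((2*L + M) ^ (1/(β-α))) ^ (β - α) ≤ t ^ (β - α) := by
      apply Real.rpow_le_rpow (Real.rpow_nonneg hMpos.le _) (le_trans h1 h2) hba.le
    rw [one_div, Real.rpow_inv_rpow hMpos.le hba.ne'] at h3
    exact h3
  have htα1 : (1:ℝ) ≤ t ^ α := by
    have := Real.rpow_le_rpow_of_exponent_le ht1 hα.le
    rwa [Real.rpow_zero] at this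
  have htb : 2*L*t^α + M ≤ t^β := by
    have h1 : t^β = t^α * t^(β-α) := by
      rw [← Real.rpow_add ht0]
      ring_nf
    have h2 : t^α * (2*L + M) ≤ t^α * t^(β-α) :=
      mul_le_mul_of_nonneg_left htM (by positivity)
    have h3 : (0:ℝ) ≤ M := by rw [hMdef]; linarith
    have h4 : M * 1 ≤ M * (t^α) := mul_le_mul_of_nonneg_left htα1 h3
    have h5 : (0:ℝ) ≤ t^α := by positivity
    nlinarith [h1, h2, h4]
  -- the tip of whisker n in X_β
  have hglen1 : 1 ≤ glen β n := glen_pos β hn2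
  set g : ℕ := (glen β n).toNat with hgdef
  have hg1 : 1 ≤ g := by omega
  have hgZ : (g : ℤ) = glen β n := Int.toNat_of_nonneg (by omega)
  have hgR : (g : ℝ) = ((glen β n : ℤ) : ℝ) := by rw [← hgZ]; push_cast; ring
  have hgl : t^β ≤ (g:ℝ) := by rw [hgR]; exact le_glen β n
  have hgu : (g:ℝ) ≤ t^β + 1 := by rw [hgR]; exact glen_le β n
  have hgn : (g:ℝ) ≤ (n:ℝ) := by
    have h1 : t^β ≤ t := by
      have := Real.rpow_le_rpow_of_exponent_le ht1 hb1
      rwa [Real.rpow_one] at this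
    have h2 : t ≤ (n:ℝ) - 1 := Real.log_le_sub_one_of_pos (by linarith)
    linarith
  set ptip : WT β := ⟨(n, g), by omega, hg1, le_of_eq hgZ⟩ with hptip
  obtain ⟨a, ha⟩ := hCS (inr ptip)
  -- depth of f a is at least g - C
  have hconnβ := xa_conn (γ := β) (x := x) hconn
  have hdlip := abs_le_gdist (γ := β) (x := x) hconn dep_lip (inr ptip) (f a)
  have hdeptip : dep β (inr ptip : XaV β V) = (g : ℤ) := by rfl
  have hdepfa : (g:ℝ) - C ≤ ((dep β (f a) : ℤ) : ℝ) := by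
    rw [hdeptip] at hdlip
    rw [abs_le] at hdlip
    push_cast at hdlip ⊢
    linarith [hdlip.1, ha]
  rcases a with v | pm
  · -- a is a vertex of X: image is shallow
    obtain ⟨φ, hφ⟩ := htrans (x 0) v
    have hℓ : ∀ s u : ℤ, G.dist (φ (x s)) (φ (x u)) = (s - u).natAbs := by
      intro s u
      rw [iso_dist hconn φ]
      exact hgeo s u
    have hsh := shallow (x := x) hconn hL hA hQ (fun s => φ (x s)) hℓ
    have hφ0 : φ (x 0) = v := hφ
    simp only [hφ0] at hsh
    have hcontra : (g:ℝ) ≤ C + h₀ := by linarith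
    have h2 : (0:ℝ) ≤ 2*L*t^α := by positivity
    rw [hMdef] at htb
    linarith
  · -- a is a whisker point
    set m : ℕ := pm.1.1 with hmdef
    set k : ℕ := pm.1.2 with hkdef
    have hm1 : 1 ≤ m := pm.2.1
    have hmR : (1:ℝ) ≤ (m:ℝ) := by exact_mod_cast hm1
    have hkg : (k : ℤ) ≤ glen α m := pm.2.2.2
    -- shallow at the base of whisker m
    have hℓ : ∀ s u : ℤ, G.dist (x (s + (m:ℤ)^2)) (x (u + (m:ℤ)^2)) = (s - u).natAbs := by
      intro s u
      rw [hgeo]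
      congr 1
      ring
    have hsh := shallow (x := x) hconn hL hA hQ (fun s => x (s + (m:ℤ)^2)) hℓ
    simp only [zero_add] at hsh
    -- dep (f a) ≤ h₀ + L k + A
    have hdab : gdist (Xa α G x) (inr pm) (inl (x ((m:ℤ)^2))) ≤ (k:ℝ) :=
      gdist_base hconn pm
    have hfab : gdist (Xa β G x) (f (inr pm)) (f (inl (x ((m:ℤ)^2)))) ≤ L*(k:ℝ) + A := by
      have := (hQ (inr pm) (inl (x ((m:ℤ)^2)))).2
      have h2 := mul_le_mul_of_nonneg_left hdab hL0.le
      linarith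
    have hdlip2 := abs_le_gdist (γ := β) (x := x) hconn dep_lip
      (f (inr pm)) (f (inl (x ((m:ℤ)^2))))
    have hdepk : ((dep β (f (inr pm)) : ℤ) : ℝ) ≤ h₀ + L*(k:ℝ) + A := by
      rw [abs_le] at hdlip2
      have := hdlip2.2
      linarith [hsh]
    -- location: m² ≤ L(C + g + n² + c₀ + A)
    have hloc : ((m:ℝ))^2 ≤ gdist (Xa α G x) (inr pm) (inl (x 0)) := by
      have h1 := dist_prj_le (γ := α) (x := x) hconn (x 0) (inr pm) (inl (x 0))
      have h2 : prj α x (inr pm : XaV α V) = x ((m:ℤ)^2) := rfl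
      have h3 : prj α x (inl (x 0) : XaV α V) = x 0 := rfl
      rw [h2, h3] at h1
      rw [hgeo, hgeo] at h1
      simp only [sub_self, Int.natAbs_zero, Nat.cast_zero, CharP.cast_eq_zero] at h1
      have h4 : ((0:ℤ) - (m:ℤ)^2).natAbs = m^2 := by
        rw [zero_sub, Int.natAbs_neg, show ((m:ℤ)^2) = ((m^2:ℕ):ℤ) by push_cast; ring,
          Int.natAbs_natCast]
      rw [h4] at h1
      unfold gdist
      have h5 : ((m:ℤ))^2 ≤ ((Xa α G x).dist (inr pm) (inl (x 0)) : ℤ) := by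
        push_cast at h1 ⊢
        linarith
      exact_mod_cast h5
    have hup : gdist (Xa α G x) (inr pm) (inl (x 0)) ≤
        L*(gdist (Xa β G x) (f (inr pm)) (f (inl (x 0))) + A) := by
      have h1 := (hQ (inr pm) (inl (x 0))).1
      have h2 : (1/L) * gdist (Xa α G x) (inr pm) (inl (x 0)) ≤
          gdist (Xa β G x) (f (inr pm)) (f (inl (x 0))) + A := by linarith
      calc gdist (Xa α G x) (inr pm) (inl (x 0))
          = L * ((1/L) * gdist (Xa α G x) (inr pm) (inl (x 0))) := by field_simp
        _ ≤ L*(gdist (Xa β G x) (f (inr pm)) (f (inl (x 0))) + A) :=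
            mul_le_mul_of_nonneg_left h2 hL0.le
    have htipbase : gdist (Xa β G x) (inr ptip) (inl (x 0)) ≤ (g:ℝ) + (n:ℝ)^2 := by
      have h1 : gdist (Xa β G x) (inr ptip) (inl (x ((n:ℤ)^2))) ≤ (g:ℝ) :=
        gdist_base hconn ptip
      have h2 : gdist (Xa β G x) (inl (x ((n:ℤ)^2))) (inl (x 0)) = (n:ℝ)^2 := by
        rw [gdist_inl hconn, hgeo]
        have h3 : ((n:ℤ)^2 - 0).natAbs = n^2 := by
          rw [sub_zero, show ((n:ℤ)^2) = ((n^2:ℕ):ℤ) by push_cast; ring, Int.natAbs_natCast]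
        rw [h3]
        push_cast
        ring
      have h4 := gdist_triangle' hconnβ (inr ptip) (inl (x ((n:ℤ)^2))) (inl (x 0))
      linarith
    have htri : gdist (Xa β G x) (f (inr pm)) (f (inl (x 0))) ≤
        C + ((g:ℝ) + (n:ℝ)^2) + c₀ := by
      have t1 := gdist_triangle' hconnβ (f (inr pm)) (inl (x 0)) (f (inl (x 0)))
      have t2 := gdist_triangle' hconnβ (f (inr pm)) (inr ptip) (inl (x 0))
      have h3 : gdist (Xa β G x) (f (inr pm)) (inr ptip) ≤ C := by
        refine (gdist_comm' _ _ _).trans_le ?_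
        exact ha
      have h6 : gdist (Xa β G x) (inl (x 0)) (f (inl (x 0))) = c₀ := rfl
      linarith [htipbase]
    set B : ℝ := L*(C + A + c₀ + (g:ℝ) + (n:ℝ)^2) with hBdef
    have hmB : (m:ℝ)^2 ≤ B := by
      rw [hBdef]
      have h1 := le_trans hloc hup
      have h2 : gdist (Xa β G x) (f (inr pm)) (f (inl (x 0))) + A ≤
          C + A + c₀ + (g:ℝ) + (n:ℝ)^2 := by linarith [htri]
      have h3 := mul_le_mul_of_nonneg_left h2 hL0.le
      linarith
    have hB1 : 1 ≤ B := by
      have h1 : (1:ℝ)*1 ≤ (m:ℝ)*(m:ℝ) := mul_le_mul hmR hmR (by norm_num) (by linarith)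
      have h2 : (m:ℝ)^2 = (m:ℝ)*(m:ℝ) := sq (m:ℝ) ▸ (sq (m:ℝ)).symm ▸ rfl
      rw [pow_two] at hmB
      linarith
    have hBK : B ≤ K * (n:ℝ)^3 := by
      have hn3R : (n:ℝ)^2 ≤ (n:ℝ)^3 := pow_le_pow_right₀ hn1R (by norm_num)
      have hnn3 : (n:ℝ) ≤ (n:ℝ)^3 := by
        have := pow_le_pow_right₀ hn1R (by norm_num : 1 ≤ 3)
        rwa [pow_one] at this
      have h1 : (1:ℝ) ≤ (n:ℝ)^3 := by
        have := pow_le_pow_right₀ hn1R (by norm_num : 0 ≤ 3)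
        rwa [pow_zero] at this
      rw [hBdef, hKdef]
      have e1 : L*(C+A+c₀) ≤ L*(C+A+c₀) * (n:ℝ)^3 := by
        have h0 : (0:ℝ) ≤ L*(C+A+c₀) := by
          apply mul_nonneg hL0.le
          linarith
        exact le_mul_of_one_le_right h0 h1
      have e2 : L*(g:ℝ) ≤ L*(n:ℝ)^3 := by
        have := mul_le_mul_of_nonneg_left (le_trans hgn hnn3) hL0.le
        linarith
      have e3 : L*(n:ℝ)^2 ≤ L*(n:ℝ)^3 := by
        have := mul_le_mul_of_nonneg_left hn3R hL0.le
        linarith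
      linarith [e1, e2, e3, h1]
    have hBpos : (0:ℝ) < B := by linarith
    have hlogB : Real.log B ≤ Real.log K + 3*t := by
      have h1 : Real.log B ≤ Real.log (K * (n:ℝ)^3) := Real.log_le_log hBpos hBK
      rw [Real.log_mul (by linarith : K ≠ 0) (pow_pos (by linarith : (0:ℝ) < (n:ℝ)) 3).ne',
        Real.log_pow] at h1
      push_cast at h1
      rw [htdef]
      linarith
    have hlogm : 2 * Real.log m ≤ Real.log B := by
      have h1 : Real.log ((m:ℝ)^2) ≤ Real.log B := Real.log_le_log (by positivity) hmB
      rw [Real.log_pow] at h1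
      push_cast at h1
      linarith
    have hlm0 : 0 ≤ Real.log m := Real.log_natCast_nonneg m
    have hlm : Real.log m ≤ 2*t := by linarith
    have hkb : (k:ℝ) ≤ 2*t^α + 1 := by
      have h1 : (k:ℝ) ≤ (glen α m : ℝ) := by exact_mod_cast hkg
      have h2 : (glen α m : ℝ) ≤ Real.log m ^ α + 1 := glen_le α m
      have h3 : Real.log m ^ α ≤ (2*t) ^ α := Real.rpow_le_rpow hlm0 hlm hα.le
      have h4 : (2*t) ^ α = 2^α * t^α := Real.mul_rpow (by norm_num) ht0.le
      have h5 : (2:ℝ)^α ≤ 2 := by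
        have := Real.rpow_le_rpow_of_exponent_le (by norm_num : (1:ℝ) ≤ 2)
          (le_trans hab.le hb1)
        rwa [Real.rpow_one] at this
      have h6 : (2:ℝ)^α * t^α ≤ 2 * t^α := by
        have h7 : (0:ℝ) ≤ t^α := by positivity
        exact mul_le_mul_of_nonneg_right h5 h7
      linarith
    -- final contradiction
    have hfin : (g:ℝ) - C ≤ h₀ + L*(2*t^α + 1) + A := by
      have := mul_le_mul_of_nonneg_left hkb hL0.le
      linarith [hdepfa, hdepk]
    rw [hMdef] at htb
    linarith [htb, hgl, hfin]

end St15

/-- if `X` is moreover vertex-transitive, then for `0 < α < β ≤ 1` no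
quasi-isometric embedding `X_α → X_β` is coarsely surjective; consequently, for distinct
`α, β ∈ (0,1]` the graphs `X_α` and `X_β` are not quasi-isometric. -/
theorem stmt15 {V : Type*} (G : SimpleGraph V) [Infinite V]
    (hlf : ∀ v : V, (G.neighborSet v).Finite) (hconn : G.Connected)
    (htrans : ∀ u v : V, ∃ φ : G ≃g G, φ u = v)
    (x : ℤ → V) (hgeo : ∀ m n : ℤ, G.dist (x m) (x n) = (m - n).natAbs) :
    (∀ α β : ℝ, 0 < α → α < β → β ≤ 1 →
      ∀ (L A : ℝ) (f : XaV α V → XaV β V), 1 ≤ L → 0 ≤ A →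
        IsQIE (gdist (Xa α G x)) (gdist (Xa β G x)) L A f →
        ¬ IsCoarselySurj (gdist (Xa β G x)) f) ∧
    (∀ α β : ℝ, 0 < α → α ≤ 1 → 0 < β → β ≤ 1 → α ≠ β →
      ¬ ∃ (L A : ℝ) (f : XaV α V → XaV β V), 1 ≤ L ∧ 0 ≤ A ∧
        IsQIE (gdist (Xa α G x)) (gdist (Xa β G x)) L A f ∧
        IsCoarselySurj (gdist (Xa β G x)) f) := by
  have part1 := St15.part1main (G := G) (x := x) hconn htrans hgeo
  refine ⟨part1, ?_⟩
  intro α β hα hα1 hβ hβ1 hne hex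
  obtain ⟨L, A, f, hL, hA, hQ, hCS⟩ := hex
  rcases lt_or_gt_of_ne hne with hlt | hgt
  · exact part1 α β hα hlt hβ1 L A f hL hA hQ hCS
  · obtain ⟨C, hC0, hC⟩ := hCS
    have hL0 : (0:ℝ) < L := lt_of_lt_of_le one_pos hL
    choose g hg using hC
    have hconnβ := St15.xa_conn (γ := β) (x := x) hconn
    have hAC0 : (0:ℝ) ≤ A + 2*C := by linarith
    have hA'0 : (0:ℝ) ≤ L*(A + 2*C) := mul_nonneg hL0.le hAC0
    have hinv : (1:ℝ)/L ≤ 1 := by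
      rw [div_le_one hL0]
      exact hL
    have hQg : IsQIE (gdist (Xa β G x)) (gdist (Xa α G x)) L (L*(A + 2*C)) g := by
      intro a b
      have h1 := hQ (g a) (g b)
      set dα := gdist (Xa α G x) (g a) (g b) with hdα
      set dβ := gdist (Xa β G x) a b with hdβ
      set D := gdist (Xa β G x) (f (g a)) (f (g b)) with hD
      have tri1 : D ≤ dβ + 2*C := by
        have t1 := St15.gdist_triangle' hconnβ (f (g a)) a (f (g b))
        have t2 := St15.gdist_triangle' hconnβ a b (f (g b))
        have c1 : gdist (Xa β G x) (f (g a)) a ≤ C := by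
          rw [St15.gdist_comm']
          exact hg a
        have c2 : gdist (Xa β G x) b (f (g b)) ≤ C := hg b
        linarith
      have tri2 : dβ ≤ D + 2*C := by
        have t1 := St15.gdist_triangle' hconnβ a (f (g a)) b
        have t2 := St15.gdist_triangle' hconnβ (f (g a)) (f (g b)) b
        have c1 : gdist (Xa β G x) a (f (g a)) ≤ C := hg a
        have c2 : gdist (Xa β G x) (f (g b)) b ≤ C := by
          rw [St15.gdist_comm']
          exact hg b
        linarith
      constructor
      · -- lower bound
        have e2 : dβ ≤ L*dα + (A + 2*C) := by linarith [tri2, h1.2]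
        have e3 := mul_le_mul_of_nonneg_left e2 (by positivity : (0:ℝ) ≤ 1/L)
        have e4 : (1/L) * (L*dα) = dα := by field_simp
        have e5 : (1/L) * (A + 2*C) ≤ L*(A + 2*C) := by
          have := mul_le_mul_of_nonneg_right (le_trans hinv hL) hAC0
          linarith [mul_le_mul_of_nonneg_right hinv hAC0]
        have e6 : (1/L) * (L*dα + (A + 2*C)) = (1/L)*(L*dα) + (1/L)*(A+2*C) := by ring
        rw [e6, e4] at e3
        linarith
      · -- upper bound
        have e1 : (1/L)*dα ≤ D + A := by linarith [h1.1]
        have e2 : dα = L*((1/L)*dα) := by field_simp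
        have e3 : L*((1/L)*dα) ≤ L*(D + A) := mul_le_mul_of_nonneg_left e1 hL0.le
        have e4 : L*(D + A) ≤ L*((dβ + 2*C) + A) :=
          mul_le_mul_of_nonneg_left (by linarith) hL0.le
        have e5 : L*((dβ + 2*C) + A) = L*dβ + L*(A + 2*C) := by ring
        linarith [e2, e3, e4]
    have hCSg : IsCoarselySurj (gdist (Xa α G x)) g := by
      refine ⟨L*(C+A), by positivity, ?_⟩
      intro y
      refine ⟨f y, ?_⟩
      have h1 := (hQ y (g (f y))).1
      have h2 : gdist (Xa β G x) (f y) (f (g (f y))) ≤ C := hg (f y)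
      have e1 : (1/L) * gdist (Xa α G x) y (g (f y)) ≤ C + A := by linarith
      have e2 : gdist (Xa α G x) y (g (f y)) = L*((1/L) * gdist (Xa α G x) y (g (f y))) := by
        field_simp
      have e3 := mul_le_mul_of_nonneg_left e1 hL0.le
      linarith [e2, e3]
    exact part1 β α hβ hgt hα1 L (L*(A + 2*C)) g hL hA'0 hQg hCSg
end
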